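/- arXiv:2505.07298 — 7 statements merged into one kernel-verified Lean document; each statement's English description precedes it below -/
import Mathlib

section
/- Under the setting below, for every fixed ε ∈ ℝ^ℓ the function x ↦ φ(x, c(x) + Q(x)ε) is L_φ(L_c + √ℓ·L_q‖ε‖)-weakly convex on 𝒪, i.e., x ↦ φ(x, c(x)+Q(x)ε) + (L_φ(L_c + √ℓ L_q‖ε‖)/2)‖x‖² is convex on 𝒪. -/
/-!
Along a segment, a map `g` whose derivative is `M`-Lipschitz deviates from its secant by at most
`M/2 · a b ‖x - y‖²`. For `g(x) = c(x) + Q(x)ε` the derivative is `M`-Lipschitz with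
`M = L_c + √ℓ L_q ‖ε‖`, the `√ℓ` coming from assembling `ℓ` rows into a matrix. Joint convexity of
`φ` and `L_φ`-Lipschitzness in its second argument then give
`φ(z, g z) ≤ a φ(x, g x) + b φ(y, g y) + L_φ M/2 · a b ‖x - y‖²` at `z = a x + b y`, which is
`(-L_φ M)`-strong convexity, i.e. convexity of `φ(x, g x) + L_φ M/2 · ‖x‖²`.
-/

open scoped RealInnerProductSpace

noncomputable section

/-- The continuous linear map `ℝ^d → ℝ^ℓ` determined by its `ℓ` rows (as functionals). -/
def rowCLM {d l : ℕ} (rows : Fin l → (EuclideanSpace ℝ (Fin d) →L[ℝ] ℝ)) :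
    EuclideanSpace ℝ (Fin d) →L[ℝ] EuclideanSpace ℝ (Fin l) :=
  (((EuclideanSpace.equiv (Fin l) ℝ).symm :
      (Fin l → ℝ) →L[ℝ] EuclideanSpace ℝ (Fin l))).comp (ContinuousLinearMap.pi rows)

/-- `Q(x)`, the `ℓ×ℓ` matrix whose rows are `q_1(x)ᵀ, …, q_ℓ(x)ᵀ`, viewed as a linear map. -/
def Qop {d l : ℕ} (q : Fin l → EuclideanSpace ℝ (Fin d) → EuclideanSpace ℝ (Fin l))
    (x : EuclideanSpace ℝ (Fin d)) :
    EuclideanSpace ℝ (Fin l) →L[ℝ] EuclideanSpace ℝ (Fin l) :=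
  rowCLM (fun j => innerSL ℝ (q j x))

open Set

section LipschitzFDeriv

variable {E F : Type*} [NormedAddCommGroup E] [NormedSpace ℝ E]
  [NormedAddCommGroup F] [NormedSpace ℝ F] {s : Set E} {g : E → F} {g' : E → E →L[ℝ] F} {M : ℝ}

theorem Convex.norm_image_sub_sub_fderiv_le_of_lipschitz (hs : Convex ℝ s)
    (hg : ∀ x ∈ s, HasFDerivAt g (g' x) x)
    (hg' : ∀ x ∈ s, ∀ y ∈ s, ‖g' x - g' y‖ ≤ M * ‖x - y‖) {x y : E} (hx : x ∈ s) (hy : y ∈ s) :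
    ‖g y - g x - g' x (y - x)‖ ≤ M / 2 * ‖y - x‖ ^ 2 := by
  set v := y - x
  have hseg : ∀ t ∈ Icc (0 : ℝ) 1, x + t • v ∈ s := fun t ht => hs.add_smul_sub_mem hx hy ht
  have hderiv : ∀ t ∈ Icc (0 : ℝ) 1, HasDerivAt (fun t : ℝ => g (x + t • v) - g x - t • g' x v)
      (g' (x + t • v) v - g' x v) t := by
    intro t ht
    have hline : HasDerivAt (fun t : ℝ => x + t • v) v t := by
      simpa using ((hasDerivAt_id t).smul_const v).const_add x
    have h := (((hg _ (hseg t ht)).comp_hasDerivAt t hline).sub_const (g x)).sub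
      ((hasDerivAt_id t).smul_const (g' x v))
    rwa [one_smul] at h
  have hbound : ∀ t ∈ Ico (0 : ℝ) 1, ‖g' (x + t • v) v - g' x v‖ ≤ M * ‖v‖ ^ 2 * t := by
    intro t ht
    calc ‖g' (x + t • v) v - g' x v‖ ≤ ‖g' (x + t • v) - g' x‖ * ‖v‖ := by
          simpa using (g' (x + t • v) - g' x).le_opNorm v
      _ ≤ M * (t * ‖v‖) * ‖v‖ := by
          gcongr
          simpa [norm_smul, abs_of_nonneg ht.1] using hg' _ (hseg t (Ico_subset_Icc_self ht)) x hx
      _ = M * ‖v‖ ^ 2 * t := by ring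
  have hB : ∀ t : ℝ, HasDerivAt (fun t : ℝ => M / 2 * ‖v‖ ^ 2 * t ^ 2) (M * ‖v‖ ^ 2 * t) t :=
    fun t => ((hasDerivAt_pow 2 t).const_mul (M / 2 * ‖v‖ ^ 2)).congr_deriv (by push_cast; ring)
  simpa [v] using image_norm_le_of_norm_deriv_right_le_deriv_boundary
    (fun t ht => (hderiv t ht).continuousAt.continuousWithinAt)
    (fun t ht => (hderiv t (Ico_subset_Icc_self ht)).hasDerivWithinAt) (by simp) hB hbound
    (right_mem_Icc.2 zero_le_one)

theorem Convex.norm_combo_sub_image_le_of_lipschitz_fderiv (hs : Convex ℝ s)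
    (hg : ∀ x ∈ s, HasFDerivAt g (g' x) x)
    (hg' : ∀ x ∈ s, ∀ y ∈ s, ‖g' x - g' y‖ ≤ M * ‖x - y‖) {x y : E} (hx : x ∈ s) (hy : y ∈ s)
    {a b : ℝ} (ha : 0 ≤ a) (hb : 0 ≤ b) (hab : a + b = 1) :
    ‖a • g x + b • g y - g (a • x + b • y)‖ ≤ M / 2 * (a * b * ‖x - y‖ ^ 2) := by
  obtain rfl : b = 1 - a := by linarith
  set z := a • x + (1 - a) • y
  have hz : z ∈ s := hs hx hy ha hb hab
  have hxz : x - z = (1 - a) • (x - y) := by module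
  have hyz : y - z = a • (y - x) := by module
  have hlin : a • g' z (x - z) + (1 - a) • g' z (y - z) = 0 := by
    rw [← map_smul, ← map_smul, ← map_add, hxz, hyz, ← map_zero (g' z)]
    congr 1
    module
  calc ‖a • g x + (1 - a) • g y - g z‖
      = ‖a • (g x - g z - g' z (x - z)) + (1 - a) • (g y - g z - g' z (y - z))‖ := by
        congr 1
        linear_combination (norm := module) hlin
    _ ≤ a * ‖g x - g z - g' z (x - z)‖ + (1 - a) * ‖g y - g z - g' z (y - z)‖ := by
        refine (norm_add_le _ _).trans_eq ?_
        rw [norm_smul, norm_smul, Real.norm_of_nonneg ha, Real.norm_of_nonneg hb]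
    _ ≤ a * (M / 2 * ‖x - z‖ ^ 2) + (1 - a) * (M / 2 * ‖y - z‖ ^ 2) := by
        gcongr
        · exact hs.norm_image_sub_sub_fderiv_le_of_lipschitz hg hg' hz hx
        · exact hs.norm_image_sub_sub_fderiv_le_of_lipschitz hg hg' hz hy
    _ = M / 2 * (a * (1 - a) * ‖x - y‖ ^ 2) := by
        rw [hxz, hyz, norm_smul, norm_smul, Real.norm_of_nonneg ha, Real.norm_of_nonneg hb,
          norm_sub_rev y]
        ring

theorem ConvexOn.strongConvexOn_neg_comp_of_lipschitz_fderiv {φ : E → F → ℝ} {L : ℝ}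
    (hφ : ConvexOn ℝ (s ×ˢ univ) (fun p => φ p.1 p.2)) (hL : 0 ≤ L)
    (hφL : ∀ x ∈ s, ∀ u v, |φ x u - φ x v| ≤ L * ‖u - v‖) (hs : Convex ℝ s)
    (hg : ∀ x ∈ s, HasFDerivAt g (g' x) x)
    (hg' : ∀ x ∈ s, ∀ y ∈ s, ‖g' x - g' y‖ ≤ M * ‖x - y‖) :
    StrongConvexOn s (-(L * M)) (fun x => φ x (g x)) := by
  refine ⟨hs, fun x hx y hy a b ha hb hab => ?_⟩
  set z := a • x + b • y
  have hsecant := hs.norm_combo_sub_image_le_of_lipschitz_fderiv hg hg' hx hy ha hb hab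
  have hconv : φ z (a • g x + b • g y) ≤ a • φ x (g x) + b • φ y (g y) :=
    hφ.2 (mk_mem_prod hx (mem_univ _)) (mk_mem_prod hy (mem_univ _)) ha hb hab
  have hlip : φ z (g z) ≤ φ z (a • g x + b • g y) + L * ‖a • g x + b • g y - g z‖ := by
    have h := hφL z (hs hx hy ha hb hab) (g z) (a • g x + b • g y)
    rw [norm_sub_rev] at h
    linarith [le_abs_self (φ z (g z) - φ z (a • g x + b • g y))]
  calc φ z (g z) ≤ a • φ x (g x) + b • φ y (g y) + L * (M / 2 * (a * b * ‖x - y‖ ^ 2)) := by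
        linarith [mul_le_mul_of_nonneg_left hsecant hL]
    _ = a • φ x (g x) + b • φ y (g y) - a * b * (-(L * M) / 2 * ‖x - y‖ ^ 2) := by ring

end LipschitzFDeriv

section RowMatrix

variable {d l : ℕ}

theorem rowCLM_apply_apply (rows : Fin l → (EuclideanSpace ℝ (Fin d) →L[ℝ] ℝ))
    (v : EuclideanSpace ℝ (Fin d)) (j : Fin l) : rowCLM rows v j = rows j v := rfl

theorem rowCLM_sub (rows rows' : Fin l → (EuclideanSpace ℝ (Fin d) →L[ℝ] ℝ)) :
    rowCLM rows - rowCLM rows' = rowCLM (rows - rows') := by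
  ext v j
  simp [rowCLM_apply_apply]

theorem norm_rowCLM_le {rows : Fin l → (EuclideanSpace ℝ (Fin d) →L[ℝ] ℝ)} {C : ℝ} (hC : 0 ≤ C)
    (h : ∀ j, ‖rows j‖ ≤ C) : ‖rowCLM rows‖ ≤ √l * C := by
  refine ContinuousLinearMap.opNorm_le_bound _ (by positivity) fun v => ?_
  rw [EuclideanSpace.norm_eq, mul_assoc, ← Real.sqrt_sq (by positivity : 0 ≤ C * ‖v‖),
    ← Real.sqrt_mul (Nat.cast_nonneg l)]
  gcongr
  calc ∑ j, ‖rowCLM rows v j‖ ^ 2 ≤ ∑ _j : Fin l, (C * ‖v‖) ^ 2 := by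
        gcongr with j
        exact (rows j).le_opNorm v |>.trans (by gcongr; exact h j)
    _ = l * (C * ‖v‖) ^ 2 := by simp

theorem hasFDerivAt_Qop_apply {q : Fin l → EuclideanSpace ℝ (Fin d) → EuclideanSpace ℝ (Fin l)}
    {q' : Fin l → EuclideanSpace ℝ (Fin d) →L[ℝ] EuclideanSpace ℝ (Fin l)}
    {x : EuclideanSpace ℝ (Fin d)} (hq : ∀ j, HasFDerivAt (q j) (q' j) x)
    (ε : EuclideanSpace ℝ (Fin l)) :
    HasFDerivAt (fun x => Qop q x ε) (rowCLM fun j => (innerSL ℝ ε).comp (q' j)) x := by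
  rw [← hasFDerivWithinAt_univ, hasFDerivWithinAt_euclidean]
  intro j
  rw [hasFDerivWithinAt_univ]
  refine ((innerSL ℝ ε).hasFDerivAt.comp x (hq j) |>.congr_fderiv ?_).congr_of_eventuallyEq
    (Filter.Eventually.of_forall fun y => ?_)
  · ext v
    rfl
  · exact real_inner_comm ε (q j y)

theorem norm_rowCLM_innerSL_comp_sub_le (ε : EuclideanSpace ℝ (Fin l))
    {A B : Fin l → EuclideanSpace ℝ (Fin d) →L[ℝ] EuclideanSpace ℝ (Fin l)} {K : ℝ} (hK : 0 ≤ K)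
    (h : ∀ j, ‖A j - B j‖ ≤ K) :
    ‖(rowCLM fun j => (innerSL ℝ ε).comp (A j)) - rowCLM fun j => (innerSL ℝ ε).comp (B j)‖ ≤
      √l * (‖ε‖ * K) := by
  rw [rowCLM_sub]
  refine norm_rowCLM_le (by positivity) fun j => ?_
  calc ‖(innerSL ℝ ε).comp (A j) - (innerSL ℝ ε).comp (B j)‖
      = ‖(innerSL ℝ ε).comp (A j - B j)‖ := by rw [ContinuousLinearMap.comp_sub]
    _ ≤ ‖innerSL ℝ ε‖ * ‖A j - B j‖ := ContinuousLinearMap.opNorm_comp_le _ _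
    _ ≤ ‖ε‖ * K := by rw [innerSL_apply_norm]; gcongr; exact h j

end RowMatrix

theorem integrand_weakly_convex_general {d l : ℕ}
    (O : Set (EuclideanSpace ℝ (Fin d))) (hOopen : IsOpen O) (hOconv : Convex ℝ O)
    (φ : EuclideanSpace ℝ (Fin d) → EuclideanSpace ℝ (Fin l) → ℝ)
    (Lφ Lc Lq : ℝ) (hLφ : 0 ≤ Lφ) (hLq : 0 ≤ Lq)
    (hφconv : ConvexOn ℝ (O ×ˢ (Set.univ : Set (EuclideanSpace ℝ (Fin l))))
      (fun p => φ p.1 p.2))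
    (hφlip : ∀ x ∈ O, ∀ y ∈ O, ∀ u v : EuclideanSpace ℝ (Fin l),
      |φ x u - φ y v| ≤ Lφ * Real.sqrt (‖x - y‖ ^ 2 + ‖u - v‖ ^ 2))
    (c : EuclideanSpace ℝ (Fin d) → EuclideanSpace ℝ (Fin l))
    (hc : ContDiffOn ℝ 1 c O)
    (hcJ : ∀ x ∈ O, ∀ y ∈ O, ‖fderiv ℝ c x - fderiv ℝ c y‖ ≤ Lc * ‖x - y‖)
    (q : Fin l → EuclideanSpace ℝ (Fin d) → EuclideanSpace ℝ (Fin l))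
    (hq : ∀ j, ContDiffOn ℝ 1 (q j) O)
    (hqJ : ∀ j, ∀ x ∈ O, ∀ y ∈ O, ‖fderiv ℝ (q j) x - fderiv ℝ (q j) y‖ ≤ Lq * ‖x - y‖)
    (ε : EuclideanSpace ℝ (Fin l)) :
    ConvexOn ℝ O (fun x =>
      φ x (c x + Qop q x ε) + Lφ * (Lc + Real.sqrt l * Lq * ‖ε‖) / 2 * ‖x‖ ^ 2) := by
  have hDf : ∀ {f : EuclideanSpace ℝ (Fin d) → EuclideanSpace ℝ (Fin l)}, ContDiffOn ℝ 1 f O →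
      ∀ x ∈ O, HasFDerivAt f (fderiv ℝ f x) x := fun hf x hx =>
    ((hf.differentiableOn one_ne_zero).differentiableAt (hOopen.mem_nhds hx)).hasFDerivAt
  set Dg := fun x => fderiv ℝ c x + rowCLM fun j => (innerSL ℝ ε).comp (fderiv ℝ (q j) x)
  have hg : ∀ x ∈ O, HasFDerivAt (fun x => c x + Qop q x ε) (Dg x) x := fun x hx =>
    (hDf hc x hx).add (hasFDerivAt_Qop_apply (fun j => hDf (hq j) x hx) ε)
  have hDg : ∀ x ∈ O, ∀ y ∈ O, ‖Dg x - Dg y‖ ≤ (Lc + √l * Lq * ‖ε‖) * ‖x - y‖ := by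
    intro x hx y hy
    calc ‖Dg x - Dg y‖
        ≤ ‖fderiv ℝ c x - fderiv ℝ c y‖ + ‖(rowCLM fun j => (innerSL ℝ ε).comp (fderiv ℝ (q j) x))
            - rowCLM fun j => (innerSL ℝ ε).comp (fderiv ℝ (q j) y)‖ := by
          simp only [Dg, add_sub_add_comm]
          exact norm_add_le _ _
      _ ≤ Lc * ‖x - y‖ + √l * (‖ε‖ * (Lq * ‖x - y‖)) := by
          gcongr
          · exact hcJ x hx y hy
          · exact norm_rowCLM_innerSL_comp_sub_le ε (by positivity) fun j => hqJ j x hx y hy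
      _ = (Lc + √l * Lq * ‖ε‖) * ‖x - y‖ := by ring
  have hφL : ∀ x ∈ O, ∀ u v, |φ x u - φ x v| ≤ Lφ * ‖u - v‖ := fun x hx u v => by
    simpa [Real.sqrt_sq_eq_abs] using hφlip x hx x hx u v
  exact (strongConvexOn_iff_convex.1 (hφconv.strongConvexOn_neg_comp_of_lipschitz_fderiv hLφ hφL
    hOconv hg hDg)).congr fun x _ => by ring

/-- **Weak convexity of the integrand.** Under Assumption 1 (with `𝒪 ⊆ ℝ^d` convex open,
`φ` jointly convex and `L_φ`-Lipschitz in the ℓ2 norms, `c` C¹ with `L_c`-Lipschitz Jacobian,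
each `q_j` C¹ with `L_q`-Lipschitz Jacobian), for every fixed `ε ∈ ℝ^ℓ` the function
`x ↦ φ(x, c(x) + Q(x)ε)` is `L_φ(L_c + √ℓ·L_q‖ε‖)`-weakly convex on `𝒪`. -/
theorem integrand_weakly_convex {d l : ℕ}
    (O : Set (EuclideanSpace ℝ (Fin d))) (hOopen : IsOpen O) (hOconv : Convex ℝ O)
    (φ : EuclideanSpace ℝ (Fin d) → EuclideanSpace ℝ (Fin l) → ℝ)
    (Lφ Lc Lq : ℝ) (hLφ : 0 ≤ Lφ) (hLc : 0 ≤ Lc) (hLq : 0 ≤ Lq)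
    (hφconv : ConvexOn ℝ (O ×ˢ (Set.univ : Set (EuclideanSpace ℝ (Fin l))))
      (fun p => φ p.1 p.2))
    (hφlip : ∀ x ∈ O, ∀ y ∈ O, ∀ u v : EuclideanSpace ℝ (Fin l),
      |φ x u - φ y v| ≤ Lφ * Real.sqrt (‖x - y‖ ^ 2 + ‖u - v‖ ^ 2))
    (c : EuclideanSpace ℝ (Fin d) → EuclideanSpace ℝ (Fin l))
    (hc : ContDiffOn ℝ 1 c O)
    (hcJ : ∀ x ∈ O, ∀ y ∈ O, ‖fderiv ℝ c x - fderiv ℝ c y‖ ≤ Lc * ‖x - y‖)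
    (q : Fin l → EuclideanSpace ℝ (Fin d) → EuclideanSpace ℝ (Fin l))
    (hq : ∀ j, ContDiffOn ℝ 1 (q j) O)
    (hqJ : ∀ j, ∀ x ∈ O, ∀ y ∈ O, ‖fderiv ℝ (q j) x - fderiv ℝ (q j) y‖ ≤ Lq * ‖x - y‖)
    (ε : EuclideanSpace ℝ (Fin l)) :
    ConvexOn ℝ O (fun x =>
      φ x (c x + Qop q x ε) + Lφ * (Lc + Real.sqrt l * Lq * ‖ε‖) / 2 * ‖x‖ ^ 2) :=
  integrand_weakly_convex_general O hOopen hOconv φ Lφ Lc Lq hLφ hLq hφconv hφlip c hc hcJ q hq hqJ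
    ε

end
end

section
/- Under the setting below, the objective function f(x) = E_{ε∼P_ε}[φ(x, c(x) + Q(x)ε)] is τ-weakly convex on 𝒪 with τ = L_φ(L_c + ℓ·L_q); that is, x ↦ f(x) + (τ/2)‖x‖² is convex on 𝒪. (Proposition 3.) -/
/-!
Fix `x, y ∈ 𝒪`, weights `a + b = 1` and `z = a x + b y`. A map whose derivative is `L`-Lipschitz
fails to be affine along the segment by at most `(L/2) a b ‖x - y‖²`. Applied to `c` and to the rows
`q_j`, this puts `c(z) + Q(z)ε` within `(a b/2) ‖x - y‖² (L_c + √ℓ L_q ‖ε‖)` of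
`a (c(x) + Q(x)ε) + b (c(y) + Q(y)ε)`, so joint convexity and the Lipschitz bound of `φ` give
`φ(z, c(z) + Q(z)ε) ≤ a φ(x, …) + b φ(y, …) + L_φ (a b/2) ‖x - y‖² (L_c + √ℓ L_q ‖ε‖)`.
Taking expectations with `E‖ε‖ ≤ √(E‖ε‖²) = √ℓ` yields the weak convexity inequality with
`τ = L_φ (L_c + ℓ L_q)`.
-/

open MeasureTheory
open scoped RealInnerProductSpace

noncomputable section

open Set ProbabilityTheory

section Taylor

variable {E F : Type*} [NormedAddCommGroup E] [NormedSpace ℝ E] [NormedAddCommGroup F]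
  [NormedSpace ℝ F] {s : Set E} {g : E → F} {L : ℝ}

theorem norm_sub_sub_fderiv_le_of_lipschitz_fderiv (hs : Convex ℝ s)
    (hg : ∀ z ∈ s, DifferentiableAt ℝ g z)
    (hL : ∀ x ∈ s, ∀ y ∈ s, ‖fderiv ℝ g x - fderiv ℝ g y‖ ≤ L * ‖x - y‖)
    {x y : E} (hx : x ∈ s) (hy : y ∈ s) :
    ‖g y - g x - fderiv ℝ g x (y - x)‖ ≤ L / 2 * ‖y - x‖ ^ 2 := by
  set γ : ℝ → E := fun t => x + t • (y - x)
  have hγ : ∀ t ∈ Icc (0 : ℝ) 1, γ t ∈ s := fun t ht => hs.add_smul_sub_mem hx hy ht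
  have hderiv : ∀ t ∈ Icc (0 : ℝ) 1,
      HasDerivAt (fun t => g (γ t) - g x - t • fderiv ℝ g x (y - x))
        (fderiv ℝ g (γ t) (y - x) - fderiv ℝ g x (y - x)) t := by
    intro t ht
    have hgγ := (hg _ (hγ t ht)).hasFDerivAt.comp_hasDerivAt t
      (((hasDerivAt_id t).smul_const (y - x)).const_add x)
    exact ((hgγ.sub_const (g x)).sub
      ((hasDerivAt_id t).smul_const (fderiv ℝ g x (y - x)))).congr_deriv (by simp)
  have hbound : ∀ t ∈ Ico (0 : ℝ) 1,
      ‖fderiv ℝ g (γ t) (y - x) - fderiv ℝ g x (y - x)‖ ≤ L * ‖y - x‖ ^ 2 * t := by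
    intro t ht
    have hγx : ‖γ t - x‖ = t * ‖y - x‖ := by
      simp [γ, norm_smul, abs_of_nonneg ht.1]
    calc ‖fderiv ℝ g (γ t) (y - x) - fderiv ℝ g x (y - x)‖
        ≤ ‖fderiv ℝ g (γ t) - fderiv ℝ g x‖ * ‖y - x‖ := by
          exact (fderiv ℝ g (γ t) - fderiv ℝ g x).le_opNorm (y - x)
      _ ≤ L * ‖γ t - x‖ * ‖y - x‖ := by
          gcongr; exact hL _ (hγ t (Ico_subset_Icc_self ht)) _ hx
      _ = L * ‖y - x‖ ^ 2 * t := by rw [hγx]; ring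
  have := image_norm_le_of_norm_deriv_right_le_deriv_boundary
    (fun t ht => (hderiv t ht).continuousAt.continuousWithinAt)
    (fun t ht => (hderiv t (Ico_subset_Icc_self ht)).hasDerivWithinAt)
    (B := fun t => L / 2 * ‖y - x‖ ^ 2 * t ^ 2) (by simp [γ])
    (fun t => ((hasDerivAt_pow 2 t).const_mul (L / 2 * ‖y - x‖ ^ 2)).congr_deriv (by ring))
    hbound (right_mem_Icc.2 zero_le_one)
  simpa [γ] using this

theorem norm_convexComb_sub_le_of_lipschitz_fderiv (hs : Convex ℝ s)
    (hg : ∀ z ∈ s, DifferentiableAt ℝ g z)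
    (hL : ∀ x ∈ s, ∀ y ∈ s, ‖fderiv ℝ g x - fderiv ℝ g y‖ ≤ L * ‖x - y‖)
    {x y : E} (hx : x ∈ s) (hy : y ∈ s) {a b : ℝ} (ha : 0 ≤ a) (hb : 0 ≤ b) (hab : a + b = 1) :
    ‖a • g x + b • g y - g (a • x + b • y)‖ ≤ L / 2 * (a * b) * ‖x - y‖ ^ 2 := by
  set z := a • x + b • y
  set D := fderiv ℝ g z
  have hz : z ∈ s := hs hx hy ha hb hab
  have hxz : x - z = b • (x - y) := by
    rw [show z = (a + b) • x - b • (x - y) by module, hab]; module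
  have hyz : y - z = a • (y - x) := by
    rw [show z = (a + b) • y - a • (y - x) by module, hab]; module
  have hD : a • D (x - z) + b • D (y - z) = 0 := by
    rw [hxz, hyz, map_smul, map_smul, ← neg_sub x y, map_neg]; module
  have hsplit : a • g x + b • g y - g z =
      a • (g x - g z - D (x - z)) + b • (g y - g z - D (y - z)) := by
    linear_combination (norm := module) hab • g z + hD
  calc ‖a • g x + b • g y - g z‖
      ≤ a * ‖g x - g z - D (x - z)‖ + b * ‖g y - g z - D (y - z)‖ := by
        rw [hsplit]
        refine (norm_add_le _ _).trans_eq ?_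
        rw [norm_smul_of_nonneg ha, norm_smul_of_nonneg hb]
    _ ≤ a * (L / 2 * ‖x - z‖ ^ 2) + b * (L / 2 * ‖y - z‖ ^ 2) := by
        gcongr
        · exact norm_sub_sub_fderiv_le_of_lipschitz_fderiv hs hg hL hz hx
        · exact norm_sub_sub_fderiv_le_of_lipschitz_fderiv hs hg hL hz hy
    _ = L / 2 * (a * b) * ‖x - y‖ ^ 2 := by
        rw [hxz, hyz, norm_smul_of_nonneg ha, norm_smul_of_nonneg hb, norm_sub_rev y x]
        linear_combination (L / 2 * a * b * ‖x - y‖ ^ 2) * hab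

end Taylor

theorem convexOn_add_mul_sq_norm_of_le {E : Type*} [NormedAddCommGroup E] [InnerProductSpace ℝ E]
    {s : Set E} {f : E → ℝ} {τ : ℝ} (hs : Convex ℝ s)
    (hf : ∀ x ∈ s, ∀ y ∈ s, ∀ a b : ℝ, 0 ≤ a → 0 ≤ b → a + b = 1 →
      f (a • x + b • y) ≤ a * f x + b * f y + τ / 2 * (a * b * ‖x - y‖ ^ 2)) :
    ConvexOn ℝ s fun x => f x + τ / 2 * ‖x‖ ^ 2 := by
  have hstrong : StrongConvexOn s (-τ) f := by
    refine ⟨hs, fun x hx y hy a b ha hb hab => ?_⟩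
    have := hf x hx y hy a b ha hb hab
    simp only [smul_eq_mul]
    linarith
  simpa [neg_div] using strongConvexOn_iff_convex.1 hstrong

theorem le_convexComb_add_of_convexOn_prod {E F : Type*} [AddCommGroup E] [Module ℝ E]
    [NormedAddCommGroup F] [NormedSpace ℝ F] {s : Set E} {φ : E → F → ℝ}
    (hφ : ConvexOn ℝ (s ×ˢ univ) fun p => φ p.1 p.2) {x y : E} (hx : x ∈ s) (hy : y ∈ s)
    {a b : ℝ} (ha : 0 ≤ a) (hb : 0 ≤ b) (hab : a + b = 1) {K : ℝ}
    (hK : ∀ u v, |φ (a • x + b • y) u - φ (a • x + b • y) v| ≤ K * ‖u - v‖) (u v w : F) :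
    φ (a • x + b • y) w ≤ a * φ x u + b * φ y v + K * ‖a • u + b • v - w‖ := by
  have hconv : φ (a • x + b • y) (a • u + b • v) ≤ a * φ x u + b * φ y v := by
    simpa using hφ.2 (mk_mem_prod hx (mem_univ u)) (mk_mem_prod hy (mem_univ v)) ha hb hab
  have hlip := (abs_sub_comm _ _).trans_le (hK (a • u + b • v) w)
  linarith [le_abs_self (φ (a • x + b • y) w - φ (a • x + b • y) (a • u + b • v))]

theorem EuclideanSpace.norm_le_sqrt_card_mul {ι : Type*} [Fintype ι] {v : EuclideanSpace ℝ ι}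
    {B : ℝ} (hB : 0 ≤ B) (hv : ∀ i, |v i| ≤ B) : ‖v‖ ≤ √(Fintype.card ι) * B := by
  rw [← Real.sqrt_sq hB, ← Real.sqrt_mul (Nat.cast_nonneg _)]
  refine Real.le_sqrt_of_sq_le ?_
  rw [EuclideanSpace.real_norm_sq_eq]
  calc ∑ i, v i ^ 2 ≤ ∑ _i : ι, B ^ 2 :=
        Finset.sum_le_sum fun i _ => sq_le_sq' (neg_le_of_abs_le (hv i)) (le_of_abs_le (hv i))
    _ = Fintype.card ι * B ^ 2 := by simp

theorem Qop_apply {d l : ℕ} (q : Fin l → EuclideanSpace ℝ (Fin d) → EuclideanSpace ℝ (Fin l))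
    (x : EuclideanSpace ℝ (Fin d)) (ε : EuclideanSpace ℝ (Fin l)) (j : Fin l) :
    Qop q x ε j = ⟪q j x, ε⟫ :=
  rfl

theorem norm_convexComb_Qop_sub_le {d l : ℕ}
    {q : Fin l → EuclideanSpace ℝ (Fin d) → EuclideanSpace ℝ (Fin l)}
    {x y z : EuclideanSpace ℝ (Fin d)} {a b B : ℝ} (hB : 0 ≤ B)
    (hq : ∀ j, ‖a • q j x + b • q j y - q j z‖ ≤ B) (ε : EuclideanSpace ℝ (Fin l)) :
    ‖a • Qop q x ε + b • Qop q y ε - Qop q z ε‖ ≤ √l * (B * ‖ε‖) := by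
  refine (EuclideanSpace.norm_le_sqrt_card_mul (B := B * ‖ε‖) (by positivity) fun j => ?_).trans_eq
    (by simp)
  simp only [PiLp.sub_apply, PiLp.add_apply, PiLp.smul_apply, Qop_apply, smul_eq_mul,
    ← real_inner_smul_left, ← inner_add_left, ← inner_sub_left]
  exact (abs_real_inner_le_norm _ _).trans (by gcongr; exact hq j)

theorem integrand_le_convexComb_add {d l : ℕ} {O : Set (EuclideanSpace ℝ (Fin d))}
    (hO : Convex ℝ O) {φ : EuclideanSpace ℝ (Fin d) → EuclideanSpace ℝ (Fin l) → ℝ}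
    {Lφ Lc Lq : ℝ} (hLφ : 0 ≤ Lφ) (hLq : 0 ≤ Lq)
    (hφconv : ConvexOn ℝ (O ×ˢ univ) fun p => φ p.1 p.2)
    (hφlip : ∀ z ∈ O, ∀ u v, |φ z u - φ z v| ≤ Lφ * ‖u - v‖)
    {c : EuclideanSpace ℝ (Fin d) → EuclideanSpace ℝ (Fin l)} (hc : ∀ z ∈ O, DifferentiableAt ℝ c z)
    (hcJ : ∀ x ∈ O, ∀ y ∈ O, ‖fderiv ℝ c x - fderiv ℝ c y‖ ≤ Lc * ‖x - y‖)
    {q : Fin l → EuclideanSpace ℝ (Fin d) → EuclideanSpace ℝ (Fin l)}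
    (hq : ∀ j, ∀ z ∈ O, DifferentiableAt ℝ (q j) z)
    (hqJ : ∀ j, ∀ x ∈ O, ∀ y ∈ O, ‖fderiv ℝ (q j) x - fderiv ℝ (q j) y‖ ≤ Lq * ‖x - y‖)
    {x y : EuclideanSpace ℝ (Fin d)} (hx : x ∈ O) (hy : y ∈ O)
    {a b : ℝ} (ha : 0 ≤ a) (hb : 0 ≤ b) (hab : a + b = 1) (ε : EuclideanSpace ℝ (Fin l)) :
    φ (a • x + b • y) (c (a • x + b • y) + Qop q (a • x + b • y) ε)
      ≤ a * φ x (c x + Qop q x ε) + b * φ y (c y + Qop q y ε)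
        + Lφ * (a * b / 2 * ‖x - y‖ ^ 2) * (Lc + √l * Lq * ‖ε‖) := by
  set z := a • x + b • y
  have hc_def := norm_convexComb_sub_le_of_lipschitz_fderiv hO hc hcJ hx hy ha hb hab
  have hQ_def := norm_convexComb_Qop_sub_le (z := z) (B := Lq * (a * b / 2 * ‖x - y‖ ^ 2))
    (by positivity) (fun j => (norm_convexComb_sub_le_of_lipschitz_fderiv hO (hq j) (hqJ j)
      hx hy ha hb hab).trans_eq (by ring)) ε
  calc φ z (c z + Qop q z ε)
      ≤ a * φ x (c x + Qop q x ε) + b * φ y (c y + Qop q y ε)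
        + Lφ * ‖a • (c x + Qop q x ε) + b • (c y + Qop q y ε) - (c z + Qop q z ε)‖ :=
        le_convexComb_add_of_convexOn_prod hφconv hx hy ha hb hab
          (hφlip z (hO hx hy ha hb hab)) _ _ _
    _ ≤ _ := by
        rw [show a • (c x + Qop q x ε) + b • (c y + Qop q y ε) - (c z + Qop q z ε)
            = (a • c x + b • c y - c z) + (a • Qop q x ε + b • Qop q y ε - Qop q z ε) by module,
          mul_assoc]
        gcongr
        exact (norm_add_le_of_le hc_def hQ_def).trans_eq (by ring)

section SecondMoment

variable {ι : Type*} [Fintype ι] {μ : Measure (EuclideanSpace ℝ ι)}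

theorem integrable_norm_sq_of_integral_mul_self_eq_one (h : ∀ i, ∫ ε, ε i * ε i ∂μ = 1) :
    Integrable (fun ε : EuclideanSpace ℝ ι => ‖ε‖ ^ 2) μ := by
  -- a non-integrable function has integral `0`, so each `ε i * ε i` is integrable
  simp_rw [EuclideanSpace.real_norm_sq_eq, sq]
  exact integrable_finsetSum _ fun i _ => integrable_of_integral_eq_one (h i)

theorem integral_norm_sq_of_integral_mul_self_eq_one (h : ∀ i, ∫ ε, ε i * ε i ∂μ = 1) :
    ∫ ε, ‖ε‖ ^ 2 ∂μ = Fintype.card ι := by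
  simp_rw [EuclideanSpace.real_norm_sq_eq, sq]
  rw [integral_finsetSum _ fun i _ => integrable_of_integral_eq_one (h i)]
  simp [h]

theorem memLp_norm_two_of_integral_mul_self_eq_one (h : ∀ i, ∫ ε, ε i * ε i ∂μ = 1) :
    MemLp (fun ε : EuclideanSpace ℝ ι => ‖ε‖) 2 μ :=
  (memLp_two_iff_integrable_sq continuous_norm.aestronglyMeasurable).2
    (integrable_norm_sq_of_integral_mul_self_eq_one h)

theorem sq_integral_le_integral_sq {Ω : Type*} [MeasurableSpace Ω] {ν : Measure Ω}
    [IsProbabilityMeasure ν] {X : Ω → ℝ} (hX : MemLp X 2 ν) :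
    (∫ ω, X ω ∂ν) ^ 2 ≤ ∫ ω, X ω ^ 2 ∂ν := by
  have := variance_nonneg X ν
  rw [variance_eq_sub hX] at this
  simpa using this

theorem integral_norm_le_sqrt_card [IsProbabilityMeasure μ]
    (h : ∀ i, ∫ ε, ε i * ε i ∂μ = 1) : ∫ ε, ‖ε‖ ∂μ ≤ √(Fintype.card ι) := by
  rw [← integral_norm_sq_of_integral_mul_self_eq_one h]
  exact Real.le_sqrt_of_sq_le
    (sq_integral_le_integral_sq (memLp_norm_two_of_integral_mul_self_eq_one h))

theorem integral_add_mul_norm_le_sqrt_card [IsProbabilityMeasure μ]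
    (h : ∀ i, ∫ ε, ε i * ε i ∂μ = 1) (A : ℝ) {B : ℝ} (hB : 0 ≤ B) :
    ∫ ε, (A + B * ‖ε‖) ∂μ ≤ A + B * √(Fintype.card ι) := by
  have hnorm : Integrable (fun ε : EuclideanSpace ℝ ι => ‖ε‖) μ :=
    (memLp_norm_two_of_integral_mul_self_eq_one h).integrable one_le_two
  rw [integral_add (integrable_const A) (hnorm.const_mul B), integral_const, probReal_univ,
    one_smul, integral_const_mul]
  gcongr
  exact integral_norm_le_sqrt_card h

end SecondMoment

theorem integral_le_convexComb_add {Ω : Type*} [MeasurableSpace Ω] {μ : Measure Ω}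
    {f₀ f₁ f₂ e : Ω → ℝ} (hf₀ : Integrable f₀ μ) (hf₁ : Integrable f₁ μ) (hf₂ : Integrable f₂ μ)
    (he : Integrable e μ) {a b : ℝ} (hle : ∀ ω, f₀ ω ≤ a * f₁ ω + b * f₂ ω + e ω) :
    ∫ ω, f₀ ω ∂μ ≤ a * ∫ ω, f₁ ω ∂μ + b * ∫ ω, f₂ ω ∂μ + ∫ ω, e ω ∂μ := by
  have hf₁₂ : Integrable (fun ω => a * f₁ ω + b * f₂ ω) μ :=
    (hf₁.const_mul a).add (hf₂.const_mul b)
  calc ∫ ω, f₀ ω ∂μ ≤ ∫ ω, (a * f₁ ω + b * f₂ ω + e ω) ∂μ := integral_mono hf₀ (hf₁₂.add he) hle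
    _ = a * ∫ ω, f₁ ω ∂μ + b * ∫ ω, f₂ ω ∂μ + ∫ ω, e ω ∂μ := by
      rw [integral_add hf₁₂ he, integral_add (hf₁.const_mul a) (hf₂.const_mul b),
        integral_const_mul, integral_const_mul]

theorem objective_weakly_convex_general {d l : ℕ}
    (O : Set (EuclideanSpace ℝ (Fin d))) (hOopen : IsOpen O) (hOconv : Convex ℝ O)
    (φ : EuclideanSpace ℝ (Fin d) → EuclideanSpace ℝ (Fin l) → ℝ)
    (Lφ Lc Lq : ℝ) (hLφ : 0 ≤ Lφ) (hLq : 0 ≤ Lq)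
    (hφconv : ConvexOn ℝ (O ×ˢ (Set.univ : Set (EuclideanSpace ℝ (Fin l))))
      (fun p => φ p.1 p.2))
    (hφlip : ∀ x ∈ O, ∀ y ∈ O, ∀ u v : EuclideanSpace ℝ (Fin l),
      |φ x u - φ y v| ≤ Lφ * Real.sqrt (‖x - y‖ ^ 2 + ‖u - v‖ ^ 2))
    (c : EuclideanSpace ℝ (Fin d) → EuclideanSpace ℝ (Fin l))
    (hc : ContDiffOn ℝ 1 c O)
    (hcJ : ∀ x ∈ O, ∀ y ∈ O, ‖fderiv ℝ c x - fderiv ℝ c y‖ ≤ Lc * ‖x - y‖)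
    (q : Fin l → EuclideanSpace ℝ (Fin d) → EuclideanSpace ℝ (Fin l))
    (hq : ∀ j, ContDiffOn ℝ 1 (q j) O)
    (hqJ : ∀ j, ∀ x ∈ O, ∀ y ∈ O, ‖fderiv ℝ (q j) x - fderiv ℝ (q j) y‖ ≤ Lq * ‖x - y‖)
    (Pε : Measure (EuclideanSpace ℝ (Fin l))) [IsProbabilityMeasure Pε]
    (hcov : ∀ i j : Fin l, ∫ ε, ε i * ε j ∂Pε = if i = j then 1 else 0)
    (hint : ∀ x ∈ O, Integrable (fun ε => φ x (c x + Qop q x ε)) Pε) :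
    ConvexOn ℝ O (fun x =>
      (∫ ε, φ x (c x + Qop q x ε) ∂Pε) + Lφ * (Lc + (l : ℝ) * Lq) / 2 * ‖x‖ ^ 2) := by
  have hmom : ∀ i, ∫ ε, ε i * ε i ∂Pε = 1 := fun i => by simpa using hcov i i
  have hdiff {g : EuclideanSpace ℝ (Fin d) → EuclideanSpace ℝ (Fin l)} (hg : ContDiffOn ℝ 1 g O) :
      ∀ z ∈ O, DifferentiableAt ℝ g z := fun z hz =>
    (hg.differentiableOn one_ne_zero).differentiableAt (hOopen.mem_nhds hz)
  have hφlip' : ∀ z ∈ O, ∀ u v, |φ z u - φ z v| ≤ Lφ * ‖u - v‖ := fun z hz u v => by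
    simpa using hφlip z hz z hz u v
  have herr_int : Integrable (fun ε : EuclideanSpace ℝ (Fin l) => Lc + √l * Lq * ‖ε‖) Pε :=
    (integrable_const Lc).add
      (((memLp_norm_two_of_integral_mul_self_eq_one hmom).integrable one_le_two).const_mul _)
  refine convexOn_add_mul_sq_norm_of_le hOconv fun x hx y hy a b ha hb hab => ?_
  calc ∫ ε, φ (a • x + b • y) (c (a • x + b • y) + Qop q (a • x + b • y) ε) ∂Pε
      ≤ a * ∫ ε, φ x (c x + Qop q x ε) ∂Pε + b * ∫ ε, φ y (c y + Qop q y ε) ∂Pε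
        + ∫ ε, Lφ * (a * b / 2 * ‖x - y‖ ^ 2) * (Lc + √l * Lq * ‖ε‖) ∂Pε :=
      integral_le_convexComb_add (hint _ (hOconv hx hy ha hb hab)) (hint x hx) (hint y hy)
        (herr_int.const_mul _) (integrand_le_convexComb_add hOconv hLφ hLq hφconv
          hφlip' (hdiff hc) hcJ (fun j => hdiff (hq j)) hqJ hx hy ha hb hab)
    _ ≤ a * ∫ ε, φ x (c x + Qop q x ε) ∂Pε + b * ∫ ε, φ y (c y + Qop q y ε) ∂Pε
        + Lφ * (a * b / 2 * ‖x - y‖ ^ 2) * (Lc + √l * Lq * √l) := by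
      rw [integral_const_mul]
      gcongr
      simpa using integral_add_mul_norm_le_sqrt_card hmom Lc (by positivity)
    _ = _ := by
      linear_combination (Lφ * (a * b / 2) * ‖x - y‖ ^ 2 * Lq) *
        Real.mul_self_sqrt (Nat.cast_nonneg (α := ℝ) l)

/-- **Proposition 3.** Under Assumption 1 (with `𝒪 ⊆ ℝ^d` convex open, `φ` jointly convex and
`L_φ`-Lipschitz in the ℓ2 norms, `c` C¹ with `L_c`-Lipschitz Jacobian, each `q_j` C¹ with
`L_q`-Lipschitz Jacobian, and `ε ∼ P_ε` with mean `0` and covariance `I_ℓ`), the objective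
`f(x) = E_{ε∼P_ε}[φ(x, c(x) + Q(x)ε)]` is `τ`-weakly convex on `𝒪` with
`τ = L_φ(L_c + ℓ·L_q)`; that is, `x ↦ f(x) + (τ/2)‖x‖²` is convex on `𝒪`. -/
theorem objective_weakly_convex {d l : ℕ}
    (O : Set (EuclideanSpace ℝ (Fin d))) (hOopen : IsOpen O) (hOconv : Convex ℝ O)
    (φ : EuclideanSpace ℝ (Fin d) → EuclideanSpace ℝ (Fin l) → ℝ)
    (Lφ Lc Lq : ℝ) (hLφ : 0 ≤ Lφ) (hLc : 0 ≤ Lc) (hLq : 0 ≤ Lq)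
    (hφconv : ConvexOn ℝ (O ×ˢ (Set.univ : Set (EuclideanSpace ℝ (Fin l))))
      (fun p => φ p.1 p.2))
    (hφlip : ∀ x ∈ O, ∀ y ∈ O, ∀ u v : EuclideanSpace ℝ (Fin l),
      |φ x u - φ y v| ≤ Lφ * Real.sqrt (‖x - y‖ ^ 2 + ‖u - v‖ ^ 2))
    (c : EuclideanSpace ℝ (Fin d) → EuclideanSpace ℝ (Fin l))
    (hc : ContDiffOn ℝ 1 c O)
    (hcJ : ∀ x ∈ O, ∀ y ∈ O, ‖fderiv ℝ c x - fderiv ℝ c y‖ ≤ Lc * ‖x - y‖)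
    (q : Fin l → EuclideanSpace ℝ (Fin d) → EuclideanSpace ℝ (Fin l))
    (hq : ∀ j, ContDiffOn ℝ 1 (q j) O)
    (hqJ : ∀ j, ∀ x ∈ O, ∀ y ∈ O, ‖fderiv ℝ (q j) x - fderiv ℝ (q j) y‖ ≤ Lq * ‖x - y‖)
    (Pε : Measure (EuclideanSpace ℝ (Fin l))) [IsProbabilityMeasure Pε]
    (hmean : ∫ ε, ε ∂Pε = 0)
    (hsq : Integrable (fun ε : EuclideanSpace ℝ (Fin l) => ‖ε‖ ^ 2) Pε)
    (hcov : ∀ i j : Fin l, ∫ ε, ε i * ε j ∂Pε = if i = j then 1 else 0)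
    (hint : ∀ x ∈ O, Integrable (fun ε => φ x (c x + Qop q x ε)) Pε) :
    ConvexOn ℝ O (fun x =>
      (∫ ε, φ x (c x + Qop q x ε) ∂Pε) + Lφ * (Lc + (l : ℝ) * Lq) / 2 * ‖x‖ ^ 2) :=
  objective_weakly_convex_general O hOopen hOconv φ Lφ Lc Lq hLφ hLq hφconv hφlip c hc hcJ q hq hqJ
    Pε hcov hint
end
end

section
/- Let 𝒳 ⊆ ℝ^d be a convex set, τ ≥ 0, and let f : ℝ^d → ℝ be τ-weakly convex. Fix z ∈ 𝒳, ρ > τ, α > 0. Let ŵ ∈ 𝒳 minimize y ↦ f(y) + (ρ/2)‖y − z‖² over 𝒳, let G : ℝ^d → ℝ be α-strongly convex with minimizer u over 𝒳, and let H : ℝ^d → ℝ be α-strongly convex with minimizer v over 𝒳. Then (α/2)‖v − ŵ‖² + ((ρ−τ)/2)‖u − ŵ‖² + (α/2)‖v − u‖² + (ρ/2)‖ŵ − z‖² − (ρ/2)‖u − z‖² ≤ (H(ŵ) − f(ŵ)) + (G(v) − H(v)) + (f(u) − G(u)). (Deterministic core inequality in the proof of Proposition 7.) -/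
/-!
Each of the three objectives `y ↦ f y + ρ/2 ‖y - z‖²`, `G`, `H` is strongly convex on `X`
(the first with modulus `ρ - τ`), so it grows quadratically away from its minimizer over `X`.
Applying this to the minimizers `w`, `u`, `v` at the points `u`, `v`, `w` respectively and
adding the three inequalities, the function values telescope into the right-hand side.
-/

open Set

section QuadraticGrowth

variable {E : Type*} [NormedAddCommGroup E]

theorem StrongConvexOn.add_sq_norm_sub_le_of_isMinOn [NormedSpace ℝ E] {s : Set E} {m : ℝ}
    {g : E → ℝ} (hg : StrongConvexOn s m g) {x y : E} (hx : x ∈ s) (hmin : IsMinOn g s x)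
    (hy : y ∈ s) :
    g x + m / 2 * ‖y - x‖ ^ 2 ≤ g y := by
  have along_segment : ∀ t ∈ Ioo (0 : ℝ) 1, g x + m / 2 * (1 - t) * ‖y - x‖ ^ 2 ≤ g y := by
    rintro t ⟨ht₀, ht₁⟩
    have hmin_t : g x ≤ g ((1 - t) • x + t • y) :=
      hmin (hg.1 hx hy (by linarith) ht₀.le (by ring))
    have hconv := hg.2 hx hy (by linarith : (0 : ℝ) ≤ 1 - t) ht₀.le (by ring)
    rw [smul_eq_mul, smul_eq_mul, norm_sub_rev] at hconv
    -- dividing `t • (g x + m/2 (1 - t) ‖y - x‖²) ≤ t • g y` by `t > 0`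
    refine le_of_mul_le_mul_left ?_ ht₀
    nlinarith
  have hlim : Filter.Tendsto (fun t : ℝ => g x + m / 2 * (1 - t) * ‖y - x‖ ^ 2)
      (nhdsWithin 0 (Ioi 0)) (nhds (g x + m / 2 * ‖y - x‖ ^ 2)) := by
    have hcont : Continuous fun t : ℝ => g x + m / 2 * (1 - t) * ‖y - x‖ ^ 2 := by fun_prop
    simpa using (hcont.tendsto 0).mono_left nhdsWithin_le_nhds
  refine le_of_tendsto hlim ?_
  filter_upwards [Ioo_mem_nhdsGT (zero_lt_one' ℝ)] with t ht
  exact along_segment t ht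

variable [InnerProductSpace ℝ E]

theorem ConvexOn.strongConvexOn_add_sq_norm_sub {s : Set E} {τ : ℝ} {f : E → ℝ}
    (hf : ConvexOn ℝ s fun x => f x + τ / 2 * ‖x‖ ^ 2) (ρ : ℝ) (z : E) :
    StrongConvexOn s (ρ - τ) fun x => f x + ρ / 2 * ‖x - z‖ ^ 2 := by
  rw [strongConvexOn_iff_convex]
  -- the difference of the two quadratics is affine
  have haffine : ConvexOn ℝ s fun x => -ρ * inner ℝ z x + ρ / 2 * ‖z‖ ^ 2 :=
    (((-ρ) • innerₗ E z).convexOn hf.1).add_const _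
  refine (hf.add haffine).congr fun x _ => ?_
  rw [Pi.add_apply, norm_sub_sq_real, real_inner_comm]
  ring

end QuadraticGrowth

theorem core_inequality_general {d : ℕ}
    (X : Set (EuclideanSpace ℝ (Fin d))) (hXconv : Convex ℝ X)
    (τ : ℝ)
    (f : EuclideanSpace ℝ (Fin d) → ℝ)
    (hf : ConvexOn ℝ Set.univ (fun x => f x + τ / 2 * ‖x‖ ^ 2))
    (z : EuclideanSpace ℝ (Fin d))
    (ρ α : ℝ)
    (w : EuclideanSpace ℝ (Fin d)) (hwX : w ∈ X)
    (hw : ∀ y ∈ X, f w + ρ / 2 * ‖w - z‖ ^ 2 ≤ f y + ρ / 2 * ‖y - z‖ ^ 2)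
    (G : EuclideanSpace ℝ (Fin d) → ℝ)
    (hG : ConvexOn ℝ Set.univ (fun x => G x - α / 2 * ‖x‖ ^ 2))
    (u : EuclideanSpace ℝ (Fin d)) (huX : u ∈ X) (hu : ∀ x ∈ X, G u ≤ G x)
    (H : EuclideanSpace ℝ (Fin d) → ℝ)
    (hH : ConvexOn ℝ Set.univ (fun x => H x - α / 2 * ‖x‖ ^ 2))
    (v : EuclideanSpace ℝ (Fin d)) (hvX : v ∈ X) (hv : ∀ x ∈ X, H v ≤ H x) :
    α / 2 * ‖v - w‖ ^ 2 + (ρ - τ) / 2 * ‖u - w‖ ^ 2 + α / 2 * ‖v - u‖ ^ 2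
      + ρ / 2 * ‖w - z‖ ^ 2 - ρ / 2 * ‖u - z‖ ^ 2
      ≤ (H w - f w) + (G v - H v) + (f u - G u) := by
  have hprox : StrongConvexOn X (ρ - τ) fun y => f y + ρ / 2 * ‖y - z‖ ^ 2 :=
    (hf.subset (subset_univ X) hXconv).strongConvexOn_add_sq_norm_sub ρ z
  have hG' : StrongConvexOn X α G :=
    strongConvexOn_iff_convex.mpr (hG.subset (subset_univ X) hXconv)
  have hH' : StrongConvexOn X α H :=
    strongConvexOn_iff_convex.mpr (hH.subset (subset_univ X) hXconv)
  have growth_w := hprox.add_sq_norm_sub_le_of_isMinOn hwX (isMinOn_iff.mpr hw) huX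
  have growth_u := hG'.add_sq_norm_sub_le_of_isMinOn huX (isMinOn_iff.mpr hu) hvX
  have growth_v := hH'.add_sq_norm_sub_le_of_isMinOn hvX (isMinOn_iff.mpr hv) hwX
  rw [norm_sub_rev w v] at growth_v
  linarith

/-- **Deterministic core inequality in the proof of Proposition 7.**
Let `𝒳 ⊆ ℝ^d` be convex, `f` be `τ`-weakly convex, `z ∈ 𝒳`, `ρ > τ`, `α > 0`.
Let `w` minimize `y ↦ f y + (ρ/2)‖y − z‖²` over `𝒳`, let `G` be `α`-strongly convex with
minimizer `u` over `𝒳`, and let `H` be `α`-strongly convex with minimizer `v` over `𝒳`. Then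
`(α/2)‖v − w‖² + ((ρ−τ)/2)‖u − w‖² + (α/2)‖v − u‖² + (ρ/2)‖w − z‖² − (ρ/2)‖u − z‖²
  ≤ (H w − f w) + (G v − H v) + (f u − G u)`. -/
theorem core_inequality {d : ℕ}
    (X : Set (EuclideanSpace ℝ (Fin d))) (hXconv : Convex ℝ X)
    (τ : ℝ) (hτ : 0 ≤ τ)
    (f : EuclideanSpace ℝ (Fin d) → ℝ)
    (hf : ConvexOn ℝ Set.univ (fun x => f x + τ / 2 * ‖x‖ ^ 2))
    (z : EuclideanSpace ℝ (Fin d)) (hz : z ∈ X)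
    (ρ α : ℝ) (hρ : τ < ρ) (hα : 0 < α)
    (w : EuclideanSpace ℝ (Fin d)) (hwX : w ∈ X)
    (hw : ∀ y ∈ X, f w + ρ / 2 * ‖w - z‖ ^ 2 ≤ f y + ρ / 2 * ‖y - z‖ ^ 2)
    (G : EuclideanSpace ℝ (Fin d) → ℝ)
    (hG : ConvexOn ℝ Set.univ (fun x => G x - α / 2 * ‖x‖ ^ 2))
    (u : EuclideanSpace ℝ (Fin d)) (huX : u ∈ X) (hu : ∀ x ∈ X, G u ≤ G x)
    (H : EuclideanSpace ℝ (Fin d) → ℝ)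
    (hH : ConvexOn ℝ Set.univ (fun x => H x - α / 2 * ‖x‖ ^ 2))
    (v : EuclideanSpace ℝ (Fin d)) (hvX : v ∈ X) (hv : ∀ x ∈ X, H v ≤ H x) :
    α / 2 * ‖v - w‖ ^ 2 + (ρ - τ) / 2 * ‖u - w‖ ^ 2 + α / 2 * ‖v - u‖ ^ 2
      + ρ / 2 * ‖w - z‖ ^ 2 - ρ / 2 * ‖u - z‖ ^ 2
      ≤ (H w - f w) + (G v - H v) + (f u - G u) :=
  core_inequality_general X hXconv τ f hf z ρ α w hwX hw G hG u huX hu H hH v hvX hv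
end

section
/- Let τ > 0 and define ρ_t = ρ_0(t+1)^a, α_t = α_0(t+1)^b for t = 0,1,2,…, and P_t = ρ_{t+1}(ρ_t − τ)/α_t − (ρ_{t+1} − ρ_t). Then: (i) if 0 ≤ a ≤ b, ρ_0 > τ and α_0 ≥ ρ_0 + τ, then ρ_t > τ and α_t ≥ ρ_t + τ for every t ≥ 0; (ii) if 0 < a ≤ b ≤ 1, then P_t/(ρ_t²/α_t) → 1 as t → ∞, and consequently there exists an integer t̄ ≥ 0 such that ρ_{t+1}(ρ_t − τ) > α_t(ρ_{t+1} − ρ_t) for all t ≥ t̄. (Lemma 2(a),(b).) -/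
/-!
Write `x = t + 1`. Dividing `P_t` by `ρ_t² / α_t` gives exactly
`r (1 - τ / ρ_t) - (α_t / ρ_t) (r - 1)` with `r = ρ_{t+1} / ρ_t = (1 + 1/x)^a`. Here `r → 1`,
`ρ_t → ∞`, and Bernoulli's inequality `(1 + 1/x)^a - 1 ≤ a / x` (valid for `a ≤ 1`) bounds the last
term by `(α₀/ρ₀) a x^(b-a-1) → 0` because `b - a < 1`. A positive limit forces `P_t > 0` eventually,
which is the stated inequality.
-/

open Filter Topology Real

theorem div_sq_div_eq {τ ρ ρ' α : ℝ} (hρ : ρ ≠ 0) (hα : α ≠ 0) :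
    (ρ' * (ρ - τ) / α - (ρ' - ρ)) / (ρ ^ 2 / α) = ρ' / ρ * (1 - τ / ρ) - α / ρ * (ρ' / ρ - 1) := by
  field_simp

theorem lt_of_div_sq_div_pos {τ ρ ρ' α : ℝ} (hα : 0 < α)
    (h : 0 < (ρ' * (ρ - τ) / α - (ρ' - ρ)) / (ρ ^ 2 / α)) : α * (ρ' - ρ) < ρ' * (ρ - τ) := by
  have hnum : 0 < ρ' * (ρ - τ) / α - (ρ' - ρ) :=
    ((div_pos_iff.1 h).resolve_right fun hneg => hneg.2.not_ge (by positivity)).1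
  have := (lt_div_iff₀ hα).1 (sub_pos.1 hnum)
  linarith

theorem mul_rpow_add_le_mul_rpow {τ ρ₀ α₀ x a b : ℝ} (hτ : 0 ≤ τ) (hρ₀ : 0 ≤ ρ₀) (hx : 1 ≤ x)
    (ha : 0 ≤ a) (hab : a ≤ b) (h : ρ₀ + τ ≤ α₀) : ρ₀ * x ^ a + τ ≤ α₀ * x ^ b :=
  calc ρ₀ * x ^ a + τ ≤ ρ₀ * x ^ b + τ * x ^ b := by
        gcongr
        exact le_mul_of_one_le_right hτ (one_le_rpow hx (ha.trans hab))
    _ = (ρ₀ + τ) * x ^ b := by ring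
    _ ≤ α₀ * x ^ b := by gcongr

theorem tendsto_rpow_mul_one_add_inv_rpow_sub_one {a c : ℝ} (ha₀ : 0 ≤ a) (ha₁ : a ≤ 1)
    (hc : c < 1) : Tendsto (fun x : ℝ => x ^ c * ((1 + x⁻¹) ^ a - 1)) atTop (𝓝 0) := by
  have hbound : Tendsto (fun x : ℝ => a * x ^ (c - 1)) atTop (𝓝 0) := by
    simpa using (tendsto_rpow_neg_atTop (sub_pos.2 hc)).const_mul a
  refine tendsto_of_tendsto_of_tendsto_of_le_of_le' tendsto_const_nhds hbound ?_ ?_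
  · filter_upwards [eventually_gt_atTop 0] with x hx
    have : 1 ≤ (1 + x⁻¹) ^ a := one_le_rpow (by simp [hx.le]) ha₀
    exact mul_nonneg (by positivity) (by linarith)
  · filter_upwards [eventually_gt_atTop 0] with x hx
    have hbernoulli : (1 + x⁻¹) ^ a ≤ 1 + a * x⁻¹ :=
      rpow_one_add_le_one_add_mul_self (by linarith [inv_pos.2 hx]) ha₀ ha₁
    calc x ^ c * ((1 + x⁻¹) ^ a - 1) ≤ x ^ c * (a * x⁻¹) := by gcongr; linarith
      _ = a * x ^ (c - 1) := by rw [rpow_sub_one hx.ne']; ring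

theorem tendsto_power_step_ratio {τ ρ₀ α₀ a b : ℝ} (hρ₀ : 0 < ρ₀) (hα₀ : α₀ ≠ 0) (ha₀ : 0 < a)
    (ha₁ : a ≤ 1) (hb : b - a < 1) :
    Tendsto (fun x : ℝ => (ρ₀ * (x + 1) ^ a * (ρ₀ * x ^ a - τ) / (α₀ * x ^ b)
        - (ρ₀ * (x + 1) ^ a - ρ₀ * x ^ a)) / ((ρ₀ * x ^ a) ^ 2 / (α₀ * x ^ b))) atTop (𝓝 1) := by
  have hshift : Tendsto (fun x : ℝ => (1 + x⁻¹) ^ a) atTop (𝓝 1) := by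
    simpa using (tendsto_inv_atTop_zero.const_add 1).rpow_const (Or.inr ha₀.le)
  have hρ : Tendsto (fun x : ℝ => τ / (ρ₀ * x ^ a)) atTop (𝓝 0) :=
    tendsto_const_nhds.div_atTop ((tendsto_rpow_atTop ha₀).const_mul_atTop hρ₀)
  have hlim := (hshift.mul ((tendsto_const_nhds (x := (1 : ℝ))).sub hρ)).sub
    ((tendsto_rpow_mul_one_add_inv_rpow_sub_one ha₀.le ha₁ hb).const_mul (α₀ / ρ₀))
  rw [mul_zero, sub_zero, sub_zero, mul_one] at hlim
  refine hlim.congr' ?_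
  filter_upwards [eventually_gt_atTop 0] with x hx
  have hxa : x ^ a ≠ 0 := (rpow_pos_of_pos hx a).ne'
  have hρ_shift : ρ₀ * (x + 1) ^ a / (ρ₀ * x ^ a) = (1 + x⁻¹) ^ a := by
    rw [mul_div_mul_left _ _ hρ₀.ne', ← div_rpow (by linarith) hx.le, add_div, div_self hx.ne',
      one_div]
  have hαρ : α₀ * x ^ b / (ρ₀ * x ^ a) = α₀ / ρ₀ * x ^ (b - a) := by
    rw [rpow_sub hx, mul_div_mul_comm]
  rw [div_sq_div_eq (mul_ne_zero hρ₀.ne' hxa) (mul_ne_zero hα₀ (rpow_pos_of_pos hx b).ne'),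
    hρ_shift, hαρ, mul_assoc]

/-- **Lemma 2(a),(b).** With `ρ_t = ρ₀(t+1)^a`, `α_t = α₀(t+1)^b` and
`P_t = ρ_{t+1}(ρ_t − τ)/α_t − (ρ_{t+1} − ρ_t)`:
(i) if `0 ≤ a ≤ b`, `ρ₀ > τ` and `α₀ ≥ ρ₀ + τ`, then `ρ_t > τ` and `α_t ≥ ρ_t + τ` for all `t`;
(ii) if `0 < a ≤ b ≤ 1`, then `P_t/(ρ_t²/α_t) → 1`, and consequently there exists `t̄ ≥ 0`
such that `ρ_{t+1}(ρ_t − τ) > α_t(ρ_{t+1} − ρ_t)` for all `t ≥ t̄`. -/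
theorem power_parameter_sequences
    (τ ρ0 α0 : ℝ) (hτ : 0 < τ) (hρ0 : 0 < ρ0) (hα0 : 0 < α0)
    (a b : ℝ) (ρ α P : ℕ → ℝ)
    (hρdef : ∀ t, ρ t = ρ0 * ((t : ℝ) + 1) ^ a)
    (hαdef : ∀ t, α t = α0 * ((t : ℝ) + 1) ^ b)
    (hPdef : ∀ t, P t = ρ (t + 1) * (ρ t - τ) / α t - (ρ (t + 1) - ρ t)) :
    ((0 ≤ a → a ≤ b → τ < ρ0 → ρ0 + τ ≤ α0 → ∀ t, τ < ρ t ∧ ρ t + τ ≤ α t) ∧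
     (0 < a → a ≤ b → b ≤ 1 →
       Filter.Tendsto (fun t => P t / (ρ t ^ 2 / α t)) Filter.atTop (nhds 1) ∧
       ∃ tbar : ℕ, ∀ t ≥ tbar, α t * (ρ (t + 1) - ρ t) < ρ (t + 1) * (ρ t - τ))) := by
  have hx : ∀ t : ℕ, 1 ≤ (t : ℝ) + 1 := fun t => le_add_of_nonneg_left t.cast_nonneg
  refine ⟨fun ha hab hτρ hατ t => ?_, fun ha hab hb => ?_⟩
  · rw [hρdef, hαdef]
    exact ⟨hτρ.trans_le (le_mul_of_one_le_right hρ0.le (one_le_rpow (hx t) ha)),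
      mul_rpow_add_le_mul_rpow hτ.le hρ0.le (hx t) ha hab hατ⟩
  have hlim : Tendsto (fun t => P t / (ρ t ^ 2 / α t)) atTop (𝓝 1) := by
    have hshift := (tendsto_power_step_ratio (τ := τ) hρ0 hα0.ne' ha (hab.trans hb)
      (by linarith)).comp (tendsto_atTop_add_const_right _ 1 tendsto_natCast_atTop_atTop)
    refine hshift.congr fun t => ?_
    simp only [Function.comp_apply, hPdef, hρdef, hαdef, Nat.cast_add, Nat.cast_one]
  refine ⟨hlim, ?_⟩
  obtain ⟨N, hN⟩ := eventually_atTop.1 (hlim.eventually (eventually_gt_nhds one_pos))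
  refine ⟨N, fun t ht => lt_of_div_sq_div_pos ?_ (hPdef t ▸ hN t ht)⟩
  rw [hαdef]
  positivity
end

section
/- Let τ > 0, 0 < a ≤ b ≤ 1, ρ_t = ρ_0(t+1)^a, α_t = α_0(t+1)^b with ρ_0 > τ, α_0 ≥ ρ_0 + τ, and P_t = ρ_{t+1}(ρ_t − τ)/α_t − (ρ_{t+1} − ρ_t). Let t̄ ≥ 0 be such that P_t > 0 for all t ≥ t̄. Then, as T → ∞: 1/(Σ_{t=t̄}^T P_t) = Θ( (T+1)^{-(1+2a−b)} ) and (Σ_{t=t̄}^T ρ_t² P_t)/(Σ_{t=t̄}^T P_t)² = Θ( (T+1)^{-(1−b)} ). (Lemma 2(c).) -/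
open Filter Asymptotics Finset

/-!
The weight `P_t` is the main term `ρ_{t+1} (ρ_t - τ) / α_t`, which is `Θ(t^{2a-b})`, minus the
increment `ρ_{t+1} - ρ_t = O(t^{a-1})`, which is of lower order because `b ≤ 1 < 1 + a`.
Hence `P_t = Θ(t^{2a-b})` and `ρ_t² P_t = Θ(t^{4a-b})`. Both exponents exceed `-1`, so the
partial sums from `t̄` are `Θ(T^{1+2a-b})` and `Θ(T^{1+4a-b})`: compare `(t+1)^{s-1}` with the
telescoping increments of `t ↦ t^s`, estimated by the tangent lines of the concave (`s ≤ 1`) or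
convex (`s ≥ 1`) map `x ↦ x^s`. Both rates follow by taking a reciprocal and a quotient.
-/

lemma rpow_add_le_of_le_one {p y u : ℝ} (hp0 : 0 ≤ p) (hp1 : p ≤ 1) (hy : 0 < y)
    (hu : -y ≤ u) : (y + u) ^ p ≤ y ^ p + p * u * y ^ (p - 1) := by
  have hdiv : -1 ≤ u / y := by rwa [le_div_iff₀ hy, neg_one_mul]
  have hsplit : (y + u) ^ p = y ^ p * (1 + u / y) ^ p := by
    rw [← Real.mul_rpow hy.le (by linarith), mul_add, mul_one, mul_div_cancel₀ _ hy.ne']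
  have htangent : y ^ p + p * u * y ^ (p - 1) = y ^ p * (1 + p * (u / y)) := by
    rw [Real.rpow_sub_one hy.ne']
    field_simp
  rw [hsplit, htangent]
  exact mul_le_mul_of_nonneg_left (rpow_one_add_le_one_add_mul_self hdiv hp0 hp1) (by positivity)

lemma le_rpow_add_of_one_le {p y u : ℝ} (hp : 1 ≤ p) (hy : 0 < y) (hu : -y ≤ u) :
    y ^ p + p * u * y ^ (p - 1) ≤ (y + u) ^ p := by
  have hdiv : -1 ≤ u / y := by rwa [le_div_iff₀ hy, neg_one_mul]
  have hsplit : (y + u) ^ p = y ^ p * (1 + u / y) ^ p := by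
    rw [← Real.mul_rpow hy.le (by linarith), mul_add, mul_one, mul_div_cancel₀ _ hy.ne']
  have htangent : y ^ p + p * u * y ^ (p - 1) = y ^ p * (1 + p * (u / y)) := by
    rw [Real.rpow_sub_one hy.ne']
    field_simp
  rw [hsplit, htangent]
  exact mul_le_mul_of_nonneg_left (one_add_mul_self_le_rpow_one_add hdiv hp) (by positivity)

lemma min_mul_rpow_sub_one_le_rpow_add_one_sub_rpow {s x : ℝ} (hs : 0 < s) (hx : 0 ≤ x) :
    min s 1 * (x + 1) ^ (s - 1) ≤ (x + 1) ^ s - x ^ s := by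
  rcases le_total s 1 with hs1 | hs1
  · have := rpow_add_le_of_le_one hs.le hs1 (by positivity : 0 < x + 1) (u := -1) (by linarith)
    rw [min_eq_left hs1]
    simp only [add_neg_cancel_right, mul_neg_one] at this
    linarith
  · have hmono : x ^ (s - 1) ≤ (x + 1) ^ (s - 1) :=
      Real.rpow_le_rpow hx (by linarith) (by linarith)
    have hx_pow : x ^ s = x * x ^ (s - 1) := by
      rw [← Real.rpow_one_add' hx (by linarith), add_sub_cancel]
    have hx1_pow : (x + 1) ^ s = (x + 1) * (x + 1) ^ (s - 1) := by
      rw [← Real.rpow_one_add' (by positivity) (by linarith), add_sub_cancel]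
    rw [min_eq_right hs1, hx_pow, hx1_pow]
    nlinarith

lemma tendsto_natCast_add_one_rpow_atTop {s : ℝ} (hs : 0 < s) :
    Tendsto (fun T : ℕ => ((T : ℝ) + 1) ^ s) atTop atTop :=
  (tendsto_rpow_atTop hs).comp (tendsto_atTop_add_const_right _ 1 tendsto_natCast_atTop_atTop)

lemma isLittleO_natCast_add_one_rpow {p q : ℝ} (hpq : p < q) :
    (fun t : ℕ => ((t : ℝ) + 1) ^ p) =o[atTop] fun t => ((t : ℝ) + 1) ^ q := by
  rw [isLittleO_iff_tendsto fun t h => absurd h (by positivity)]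
  have hratio (t : ℕ) :
      ((t : ℝ) + 1) ^ p / ((t : ℝ) + 1) ^ q = (((t : ℝ) + 1) ^ (q - p))⁻¹ := by
    rw [← Real.rpow_sub (by positivity), ← Real.rpow_neg (by positivity), neg_sub]
  simp only [hratio]
  exact (tendsto_natCast_add_one_rpow_atTop (sub_pos.2 hpq)).inv_tendsto_atTop

lemma min_mul_sum_Icc_rpow_le {s : ℝ} (hs : 0 < s) {m T : ℕ} (hmT : m ≤ T) :
    min s 1 * ∑ t ∈ Icc m T, ((t : ℝ) + 1) ^ (s - 1) ≤ ((T : ℝ) + 1) ^ s :=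
  calc min s 1 * ∑ t ∈ Icc m T, ((t : ℝ) + 1) ^ (s - 1)
      ≤ ∑ t ∈ Icc m T, (((t + 1 : ℕ) : ℝ) ^ s - (t : ℝ) ^ s) := by
        rw [mul_sum]
        gcongr with t
        push_cast
        exact min_mul_rpow_sub_one_le_rpow_add_one_sub_rpow hs t.cast_nonneg
    _ = ((T : ℝ) + 1) ^ s - (m : ℝ) ^ s := by
        rw [sum_Icc_sub hmT fun t : ℕ => (t : ℝ) ^ s]
        push_cast
        rfl
    _ ≤ ((T : ℝ) + 1) ^ s := sub_le_self _ (by positivity)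

lemma sub_rpow_le_mul_sum_Icc_rpow {s : ℝ} (hs : 0 < s) {m T : ℕ} (hmT : m ≤ T) :
    ((T : ℝ) + 1) ^ s - ((m : ℝ) + 1) ^ s ≤ s * ∑ t ∈ Icc m T, ((t : ℝ) + 1) ^ (s - 1) := by
  rw [mul_sum]
  rcases le_total s 1 with hs1 | hs1
  · calc ((T : ℝ) + 1) ^ s - ((m : ℝ) + 1) ^ s
        ≤ (((T + 1 : ℕ) : ℝ) + 1) ^ s - ((m : ℝ) + 1) ^ s := by
          gcongr
          linarith
      _ = ∑ t ∈ Icc m T, ((((t + 1 : ℕ) : ℝ) + 1) ^ s - ((t : ℝ) + 1) ^ s) :=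
          (sum_Icc_sub hmT fun t : ℕ => ((t : ℝ) + 1) ^ s).symm
      _ ≤ ∑ t ∈ Icc m T, s * ((t : ℝ) + 1) ^ (s - 1) := by
          gcongr with t
          have := rpow_add_le_of_le_one hs.le hs1 (by positivity : 0 < (t : ℝ) + 1) (u := 1)
            (by linarith)
          push_cast
          linarith
  · calc ((T : ℝ) + 1) ^ s - ((m : ℝ) + 1) ^ s
        ≤ ((T : ℝ) + 1) ^ s - (m : ℝ) ^ s := by
          gcongr
          linarith
      _ = ∑ t ∈ Icc m T, (((t + 1 : ℕ) : ℝ) ^ s - (t : ℝ) ^ s) := by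
          rw [sum_Icc_sub hmT fun t : ℕ => (t : ℝ) ^ s]
          push_cast
          rfl
      _ ≤ ∑ t ∈ Icc m T, s * ((t : ℝ) + 1) ^ (s - 1) := by
          gcongr with t
          have := le_rpow_add_of_one_le hs1 (by positivity : 0 < (t : ℝ) + 1) (u := -1)
            (by linarith)
          push_cast
          simp only [add_neg_cancel_right, mul_neg_one] at this
          linarith

lemma isTheta_sum_Icc_rpow {γ : ℝ} (hγ : -1 < γ) (m : ℕ) :
    (fun T : ℕ => ∑ t ∈ Icc m T, ((t : ℝ) + 1) ^ γ) =Θ[atTop]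
      fun T => ((T : ℝ) + 1) ^ (γ + 1) := by
  have hs : 0 < γ + 1 := by linarith
  have hsum_nonneg (T : ℕ) : 0 ≤ ∑ t ∈ Icc m T, ((t : ℝ) + 1) ^ γ :=
    sum_nonneg fun t _ => by positivity
  have hupper := fun {T} (hmT : m ≤ T) => min_mul_sum_Icc_rpow_le hs hmT
  have hlower := fun {T} (hmT : m ≤ T) => sub_rpow_le_mul_sum_Icc_rpow hs hmT
  simp only [add_sub_cancel_right] at hupper hlower
  refine ⟨IsBigO.of_bound (min (γ + 1) 1)⁻¹ ?_, IsBigO.of_bound (2 * (γ + 1)) ?_⟩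
  · filter_upwards [eventually_ge_atTop m] with T hmT
    rw [Real.norm_of_nonneg (hsum_nonneg T), Real.norm_of_nonneg (by positivity),
      inv_mul_eq_div, le_div_iff₀' (by positivity)]
    exact hupper hmT
  · -- eventually `(m + 1) ^ (γ + 1)` is at most half of `(T + 1) ^ (γ + 1)`
    filter_upwards [eventually_ge_atTop m, (tendsto_natCast_add_one_rpow_atTop hs).eventually_ge_atTop
      (2 * ((m : ℝ) + 1) ^ (γ + 1))] with T hmT hT
    rw [Real.norm_of_nonneg (hsum_nonneg T), Real.norm_of_nonneg (by positivity)]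
    linarith [hlower hmT]

theorem Asymptotics.IsBigO.sum_Icc {E : Type*} [SeminormedAddCommGroup E] {f : ℕ → E}
    {g : ℕ → ℝ} {m : ℕ} (h : f =O[atTop] g) (hg : ∀ t ≥ m, 0 < g t) :
    (fun T => ∑ t ∈ Icc m T, f t) =O[atTop] fun T => ∑ t ∈ Icc m T, g t := by
  -- as `g` does not vanish on `[m, ∞)`, the eventual bound can be made to hold there everywhere
  obtain ⟨C, -, hC⟩ := bound_of_isBigO_nat_atTop h
  refine IsBigO.of_bound C (Eventually.of_forall fun T => ?_)
  have hg' : ∀ t ∈ Icc m T, 0 < g t := fun t ht => hg t (mem_Icc.1 ht).1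
  calc ‖∑ t ∈ Icc m T, f t‖ ≤ ∑ t ∈ Icc m T, ‖f t‖ := norm_sum_le _ _
    _ ≤ ∑ t ∈ Icc m T, C * g t := by
        gcongr with t ht
        simpa [abs_of_pos (hg' t ht)] using hC (hg' t ht).ne'
    _ = C * ‖∑ t ∈ Icc m T, g t‖ := by
        rw [← mul_sum, Real.norm_of_nonneg (sum_nonneg fun t ht => (hg' t ht).le)]

theorem Asymptotics.IsTheta.sum_Icc {f g : ℕ → ℝ} {m : ℕ} (h : f =Θ[atTop] g)
    (hf : ∀ t ≥ m, 0 < f t) (hg : ∀ t ≥ m, 0 < g t) :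
    (fun T => ∑ t ∈ Icc m T, f t) =Θ[atTop] fun T => ∑ t ∈ Icc m T, g t :=
  ⟨h.1.sum_Icc hg, h.2.sum_Icc hf⟩

theorem Asymptotics.IsTheta.sum_Icc_rpow {f : ℕ → ℝ} {γ : ℝ} {m : ℕ}
    (h : f =Θ[atTop] fun t => ((t : ℝ) + 1) ^ γ) (hf : ∀ t ≥ m, 0 < f t) (hγ : -1 < γ) :
    (fun T => ∑ t ∈ Icc m T, f t) =Θ[atTop] fun T => ((T : ℝ) + 1) ^ (γ + 1) :=
  (h.sum_Icc hf fun t _ => by positivity).trans (isTheta_sum_Icc_rpow hγ m)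

theorem Asymptotics.IsTheta.exists_bounds_nat {f g : ℕ → ℝ} (h : f =Θ[atTop] g)
    (hf : ∀ n, 0 ≤ f n) (hg : ∀ n, 0 ≤ g n) :
    ∃ c₁ c₂ : ℝ, 0 < c₁ ∧ c₁ ≤ c₂ ∧ ∃ N : ℕ, ∀ n, N ≤ n → c₁ * g n ≤ f n ∧ f n ≤ c₂ * g n := by
  obtain ⟨C, hC, hfg⟩ := h.1.exists_pos
  obtain ⟨C', hC', hgf⟩ := h.2.exists_pos
  obtain ⟨N, hN⟩ := eventually_atTop.1 (hfg.bound.and hgf.bound)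
  refine ⟨min C'⁻¹ C, max C'⁻¹ C, lt_min (inv_pos.2 hC') hC, min_le_max, N, fun n hn => ?_⟩
  obtain ⟨hupper, hlower⟩ := hN n hn
  rw [Real.norm_of_nonneg (hf n), Real.norm_of_nonneg (hg n)] at hupper hlower
  constructor
  · calc min C'⁻¹ C * g n ≤ C'⁻¹ * g n := mul_le_mul_of_nonneg_right (min_le_left _ _) (hg n)
      _ ≤ f n := by rwa [inv_mul_le_iff₀ hC']
  · calc f n ≤ C * g n := hupper
      _ ≤ max C'⁻¹ C * g n := mul_le_mul_of_nonneg_right (le_max_right _ _) (hg n)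

lemma isBigO_natCast_add_one_add_one_rpow_sub {a : ℝ} (ha0 : 0 ≤ a) (ha1 : a ≤ 1) :
    (fun t : ℕ => ((t : ℝ) + 1 + 1) ^ a - ((t : ℝ) + 1) ^ a) =O[atTop]
      fun t => ((t : ℝ) + 1) ^ (a - 1) := by
  refine IsBigO.of_bound a (Eventually.of_forall fun t => ?_)
  have hx : (0 : ℝ) < t + 1 := by positivity
  have hmono : ((t : ℝ) + 1) ^ a ≤ ((t : ℝ) + 1 + 1) ^ a := by gcongr; linarith
  have htangent := rpow_add_le_of_le_one ha0 ha1 hx (u := 1) (by linarith)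
  rw [Real.norm_of_nonneg (sub_nonneg.2 hmono), Real.norm_of_nonneg (by positivity)]
  linarith

theorem isTheta_weight_of_power_schedule {τ ρ0 α0 a b : ℝ} {ρ α P : ℕ → ℝ} (hρ0 : ρ0 ≠ 0)
    (hα0 : α0 ≠ 0) (ha : 0 < a) (ha1 : a ≤ 1) (hb : b < a + 1)
    (hρ : ∀ t, ρ t = ρ0 * ((t : ℝ) + 1) ^ a) (hα : ∀ t, α t = α0 * ((t : ℝ) + 1) ^ b)
    (hP : ∀ t, P t = ρ (t + 1) * (ρ t - τ) / α t - (ρ (t + 1) - ρ t)) :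
    P =Θ[atTop] fun t => ((t : ℝ) + 1) ^ (2 * a - b) := by
  have hincr : (fun t => ρ (t + 1) - ρ t) =O[atTop] fun t : ℕ => ((t : ℝ) + 1) ^ (a - 1) := by
    refine ((isBigO_natCast_add_one_add_one_rpow_sub ha.le ha1).const_mul_left ρ0).congr_left
      fun t => ?_
    rw [hρ, hρ]
    push_cast
    ring
  have hρΘ : ρ =Θ[atTop] fun t : ℕ => ((t : ℝ) + 1) ^ a := by
    rw [funext hρ]
    exact (isTheta_refl _ _).const_mul_left hρ0
  have hρ_succ : (fun t => ρ (t + 1)) =Θ[atTop] fun t : ℕ => ((t : ℝ) + 1) ^ a := by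
    have := hρΘ.add_isLittleO
      (hincr.trans_isLittleO (isLittleO_natCast_add_one_rpow (by linarith)))
    simpa only [Pi.add_def, add_sub_cancel] using this
  have hρ_sub : (fun t => ρ t - τ) =Θ[atTop] fun t : ℕ => ((t : ℝ) + 1) ^ a := by
    have hτ : (fun _ : ℕ => -τ) =o[atTop] fun t : ℕ => ((t : ℝ) + 1) ^ a :=
      isLittleO_const_left.2 <| .inr <|
        tendsto_norm_atTop_atTop.comp (tendsto_natCast_add_one_rpow_atTop ha)
    simpa only [Pi.add_def, ← sub_eq_add_neg] using hρΘ.add_isLittleO hτ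
  have hαΘ : α =Θ[atTop] fun t : ℕ => ((t : ℝ) + 1) ^ b := by
    rw [funext hα]
    exact (isTheta_refl _ _).const_mul_left hα0
  have hmain : (fun t => ρ (t + 1) * (ρ t - τ) / α t) =Θ[atTop]
      fun t : ℕ => ((t : ℝ) + 1) ^ (2 * a - b) := by
    refine ((hρ_succ.mul hρ_sub).div hαΘ).trans_eventuallyEq (.of_forall fun t => ?_)
    have hx : (0 : ℝ) < t + 1 := by positivity
    simp only
    rw [← Real.rpow_add hx, ← Real.rpow_sub hx, two_mul]
  have hsmall : (fun t => -(ρ (t + 1) - ρ t)) =o[atTop]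
      fun t : ℕ => ((t : ℝ) + 1) ^ (2 * a - b) :=
    hincr.neg_left.trans_isLittleO (isLittleO_natCast_add_one_rpow (by linarith))
  simpa only [Pi.add_def, ← sub_eq_add_neg, ← hP] using hmain.add_isLittleO hsmall

/-- **Lemma 2(c).** Let `τ > 0`, `0 < a ≤ b ≤ 1`, `ρ_t = ρ₀(t+1)^a`, `α_t = α₀(t+1)^b` with
`ρ₀ > τ`, `α₀ ≥ ρ₀ + τ`, `P_t = ρ_{t+1}(ρ_t − τ)/α_t − (ρ_{t+1} − ρ_t)`, and `t̄ ≥ 0` such that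
`P_t > 0` for all `t ≥ t̄`. Then, as `T → ∞`,
`1/(Σ_{t=t̄}^T P_t) = Θ((T+1)^{-(1+2a−b)})` and
`(Σ_{t=t̄}^T ρ_t² P_t)/(Σ_{t=t̄}^T P_t)² = Θ((T+1)^{-(1−b)})`. -/
theorem power_parameter_sum_rates
    (τ ρ0 α0 a b : ℝ) (hτ : 0 < τ) (hρ0 : τ < ρ0) (hα0 : ρ0 + τ ≤ α0)
    (ha : 0 < a) (hab : a ≤ b) (hb1 : b ≤ 1)
    (ρ α P : ℕ → ℝ)
    (hρdef : ∀ t, ρ t = ρ0 * ((t : ℝ) + 1) ^ a)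
    (hαdef : ∀ t, α t = α0 * ((t : ℝ) + 1) ^ b)
    (hPdef : ∀ t, P t = ρ (t + 1) * (ρ t - τ) / α t - (ρ (t + 1) - ρ t))
    (tbar : ℕ) (htbar : ∀ t ≥ tbar, 0 < P t) :
    (∃ c1 c2 : ℝ, 0 < c1 ∧ c1 ≤ c2 ∧ ∃ T0 : ℕ, ∀ T : ℕ, tbar ≤ T → T0 ≤ T →
       c1 * ((T : ℝ) + 1) ^ (-(1 + 2 * a - b)) ≤ 1 / ∑ t ∈ Finset.Icc tbar T, P t ∧
       1 / ∑ t ∈ Finset.Icc tbar T, P t ≤ c2 * ((T : ℝ) + 1) ^ (-(1 + 2 * a - b))) ∧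
    (∃ c1 c2 : ℝ, 0 < c1 ∧ c1 ≤ c2 ∧ ∃ T0 : ℕ, ∀ T : ℕ, tbar ≤ T → T0 ≤ T →
       c1 * ((T : ℝ) + 1) ^ (-(1 - b)) ≤
         (∑ t ∈ Finset.Icc tbar T, ρ t ^ 2 * P t) / (∑ t ∈ Finset.Icc tbar T, P t) ^ 2 ∧
       (∑ t ∈ Finset.Icc tbar T, ρ t ^ 2 * P t) / (∑ t ∈ Finset.Icc tbar T, P t) ^ 2 ≤
         c2 * ((T : ℝ) + 1) ^ (-(1 - b))) := by
  have hρ0_pos : 0 < ρ0 := hτ.trans hρ0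
  have hP := isTheta_weight_of_power_schedule hρ0_pos.ne' (by linarith : 0 < α0).ne' ha
    (hab.trans hb1) (by linarith) hρdef hαdef hPdef
  have hρ : ρ =Θ[atTop] fun t : ℕ => ((t : ℝ) + 1) ^ a := by
    rw [funext hρdef]
    exact (isTheta_refl _ _).const_mul_left hρ0_pos.ne'
  have hQ : (fun t => ρ t ^ 2 * P t) =Θ[atTop] fun t : ℕ => ((t : ℝ) + 1) ^ (4 * a - b) := by
    refine ((hρ.pow 2).mul hP).trans_eventuallyEq (.of_forall fun t => ?_)
    have hx : (0 : ℝ) < t + 1 := by positivity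
    simp only
    rw [← Real.rpow_natCast, ← Real.rpow_mul hx.le, ← Real.rpow_add hx]
    ring_nf
  have hS := hP.sum_Icc_rpow htbar (by linarith)
  have hQS := hQ.sum_Icc_rpow (fun t ht => mul_pos (by rw [hρdef]; positivity) (htbar t ht))
    (by linarith)
  have hS_inv : (fun T => (∑ t ∈ Icc tbar T, P t)⁻¹) =Θ[atTop]
      fun T : ℕ => ((T : ℝ) + 1) ^ (-(1 + 2 * a - b)) := by
    refine hS.inv.trans_eventuallyEq (.of_forall fun T => ?_)
    simp only
    rw [← Real.rpow_neg (by positivity)]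
    ring_nf
  have hQS_div : (fun T => (∑ t ∈ Icc tbar T, ρ t ^ 2 * P t) / (∑ t ∈ Icc tbar T, P t) ^ 2)
      =Θ[atTop] fun T : ℕ => ((T : ℝ) + 1) ^ (-(1 - b)) := by
    refine (hQS.div (hS.pow 2)).trans_eventuallyEq (.of_forall fun T => ?_)
    have hx : (0 : ℝ) < T + 1 := by positivity
    simp only
    rw [← Real.rpow_natCast, ← Real.rpow_mul hx.le, ← Real.rpow_sub hx]
    ring_nf
  have hS_nonneg (T : ℕ) : 0 ≤ ∑ t ∈ Icc tbar T, P t :=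
    sum_nonneg fun t ht => (htbar t (mem_Icc.1 ht).1).le
  obtain ⟨c1, c2, hc1, hc12, T0, hT0⟩ :=
    hS_inv.exists_bounds_nat (fun T => inv_nonneg.2 (hS_nonneg T)) fun T => by positivity
  obtain ⟨d1, d2, hd1, hd12, T1, hT1⟩ := hQS_div.exists_bounds_nat
    (fun T => div_nonneg (sum_nonneg fun t ht => mul_nonneg (sq_nonneg _)
      (htbar t (mem_Icc.1 ht).1).le) (sq_nonneg _)) fun T => by positivity
  exact ⟨⟨c1, c2, hc1, hc12, T0, fun T _ hT => by simpa only [one_div] using hT0 T hT⟩,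
    ⟨d1, d2, hd1, hd12, T1, fun T _ hT => hT1 T hT⟩⟩
end

section
/- Let τ > 0, ρ_0 > τ, α_0 ≥ ρ_0 + τ, and set ρ_t ≡ ρ_0, α_t = α_0(t+1)^{1/2}, m_t ≡ m, n_t ≡ n, so that P_t = ρ_0(ρ_0 − τ)/α_t ∝ (t+1)^{-1/2}. Suppose T ≥ 2 and the nonnegative reals {A_t} and reals {M_t} satisfy the per-iteration descent inequality on {0,…,T} and M_0 − M_{T+1} ≤ Δ_0. Let p_t = P_t/Σ_{s=0}^T P_s. Then Σ_{t=0}^T p_t A_t ≤ (4Δ_0α_0/(ρ_0(ρ_0 − τ)))·(T+1)^{-1/2} + (16L²/(m·α_0(ρ_0 − τ)))·log(T+1)·(T+1)^{-1/2} + 4C̃/(n^{r/2}(ρ_0 − τ)). (Corollary 1, bound (11).) -/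
open scoped BigOperators

private lemma harmonic_real (N : ℕ) :
    ∑ t ∈ Finset.range N, ((t : ℝ) + 1)⁻¹ = (harmonic N : ℝ) := by
  rw [harmonic]
  push_cast
  rfl

set_option maxHeartbeats 1000000 in
/-- **Corollary 1, bound (11).** With `ρ_t ≡ ρ₀ > τ`, `α_t = α₀(t+1)^{1/2}` (`α₀ ≥ ρ₀ + τ`),
`m_t ≡ m`, `n_t ≡ n`, so `P_t = ρ₀(ρ₀ − τ)/α_t`, suppose `T ≥ 2`, the nonnegative `{A_t}` and
`{M_t}` satisfy the per-iteration descent inequality on `{0,…,T}` and `M_0 − M_{T+1} ≤ Δ₀`,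
and let `p_t = P_t/Σ_{s=0}^T P_s`. Then
`Σ_{t=0}^T p_t A_t ≤ (4Δ₀α₀/(ρ₀(ρ₀ − τ)))(T+1)^{-1/2}
  + (16L²/(m α₀(ρ₀ − τ))) log(T+1) (T+1)^{-1/2} + 4C̃/(n^{r/2}(ρ₀ − τ))`. -/
theorem sqrt_proximal_parameter_bound
    (τ ρ0 α0 : ℝ) (hτ : 0 < τ) (hρ0 : τ < ρ0) (hα0 : ρ0 + τ ≤ α0)
    (L Ctil r Δ0 : ℝ) (hL : 0 < L) (hCtil : 0 < Ctil) (hr : 0 < r) (hr1 : r ≤ 1)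
    (hΔ0 : 0 ≤ Δ0)
    (msz nsz : ℝ) (hm : 0 < msz) (hn : 0 < nsz)
    (α P : ℕ → ℝ)
    (hαdef : ∀ t, α t = α0 * ((t : ℝ) + 1) ^ ((1 : ℝ) / 2))
    (hPdef : ∀ t, P t = ρ0 * (ρ0 - τ) / α t)
    (T : ℕ) (hT : 2 ≤ T)
    (A M : ℕ → ℝ) (hA : ∀ t, 0 ≤ A t)
    (hdes : ∀ t ≤ T,
      P t * A t ≤ 2 * M t - 2 * M (t + 1)
        + 4 * ρ0 * L ^ 2 / (msz * α t ^ 2)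
        + 4 * ρ0 * Ctil / (nsz ^ (r / 2) * α t))
    (hM : M 0 - M (T + 1) ≤ Δ0)
    (p : ℕ → ℝ) (hpdef : ∀ t, p t = P t / ∑ s ∈ Finset.range (T + 1), P s) :
    ∑ t ∈ Finset.range (T + 1), p t * A t ≤
      4 * Δ0 * α0 / (ρ0 * (ρ0 - τ)) * ((T : ℝ) + 1) ^ (-(1 : ℝ) / 2)
        + 16 * L ^ 2 / (msz * α0 * (ρ0 - τ)) * Real.log ((T : ℝ) + 1) * ((T : ℝ) + 1) ^ (-(1 : ℝ) / 2)
        + 4 * Ctil / (nsz ^ (r / 2) * (ρ0 - τ)) := by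
  have hρτ : 0 < ρ0 - τ := by linarith
  have hρ0pos : 0 < ρ0 := by linarith
  have hα0pos : 0 < α0 := by linarith
  have hnr : 0 < nsz ^ (r / 2) := Real.rpow_pos_of_pos hn _
  set n : ℝ := (T : ℝ) + 1 with hn_def
  have hn3 : (3 : ℝ) ≤ n := by
    have : (2 : ℝ) ≤ (T : ℝ) := by exact_mod_cast hT
    simp only [hn_def]; linarith
  have hnpos : (0 : ℝ) < n := by linarith
  -- sums
  set H : ℝ := ∑ t ∈ Finset.range (T + 1), ((t : ℝ) + 1) ^ (-(1 : ℝ) / 2) with hH_def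
  set G : ℝ := ∑ t ∈ Finset.range (T + 1), ((t : ℝ) + 1)⁻¹ with hG_def
  set S : ℝ := ∑ s ∈ Finset.range (T + 1), P s with hS_def
  set K : ℝ := ρ0 * (ρ0 - τ) / α0 with hK_def
  have hKpos : 0 < K := by positivity
  -- basic positivity of each summand
  have hterm_pos : ∀ t : ℕ, (0 : ℝ) < ((t : ℝ) + 1) ^ (-(1 : ℝ) / 2) := fun t => by
    positivity
  have hαteq : ∀ t : ℕ, α t = α0 * ((t : ℝ) + 1) ^ ((1 : ℝ) / 2) := hαdef
  have hbase_pos : ∀ t : ℕ, (0 : ℝ) < (t : ℝ) + 1 := fun t => by positivity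
  have hhalf_pos : ∀ t : ℕ, (0 : ℝ) < ((t : ℝ) + 1) ^ ((1 : ℝ) / 2) := fun t => by positivity
  have hinv : ∀ t : ℕ, ((t : ℝ) + 1) ^ (-(1 : ℝ) / 2) = (((t : ℝ) + 1) ^ ((1 : ℝ) / 2))⁻¹ := by
    intro t
    rw [neg_div, Real.rpow_neg (le_of_lt (hbase_pos t))]
  have hsq : ∀ t : ℕ, (((t : ℝ) + 1) ^ ((1 : ℝ) / 2)) ^ 2 = (t : ℝ) + 1 := by
    intro t
    rw [← Real.rpow_natCast (((t : ℝ) + 1) ^ ((1 : ℝ) / 2)) 2,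
      ← Real.rpow_mul (le_of_lt (hbase_pos t))]
    norm_num
  -- S = K * H
  have hS : S = K * H := by
    rw [hS_def, hH_def, Finset.mul_sum]
    refine Finset.sum_congr rfl fun t _ => ?_
    rw [hPdef t, hαdef t, hinv t, hK_def]
    field_simp
  -- H lower bound: n^{1/2} ≤ H
  have hHge : n ^ ((1 : ℝ) / 2) ≤ H := by
    have hle : ∀ t ∈ Finset.range (T + 1), n ^ (-(1 : ℝ) / 2) ≤ ((t : ℝ) + 1) ^ (-(1 : ℝ) / 2) := by
      intro t ht
      apply Real.rpow_le_rpow_of_nonpos (hbase_pos t)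
      · have : (t : ℝ) ≤ (T : ℝ) := by
          exact_mod_cast Nat.lt_succ_iff.mp (Finset.mem_range.mp ht)
        simp only [hn_def]; linarith
      · norm_num
    have := Finset.card_nsmul_le_sum (Finset.range (T + 1))
      (fun t => ((t : ℝ) + 1) ^ (-(1 : ℝ) / 2)) (n ^ (-(1 : ℝ) / 2)) hle
    rw [Finset.card_range, nsmul_eq_mul] at this
    have hcast : ((T + 1 : ℕ) : ℝ) = n := by push_cast [hn_def]; ring
    rw [hcast] at this
    have e : n * n ^ (-(1 : ℝ) / 2) = n ^ ((1 : ℝ) / 2) := by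
      nth_rewrite 1 [← Real.rpow_one n]
      rw [← Real.rpow_add hnpos]
      norm_num
    linarith [this, e.ge]
  have hHpos : 0 < H := lt_of_lt_of_le (by positivity) hHge
  have hSpos : 0 < S := by rw [hS]; positivity
  -- key product inequality: 1 ≤ n^{-1/2} * H
  have hone : 1 ≤ n ^ (-(1 : ℝ) / 2) * H := by
    calc (1 : ℝ) = n ^ (-(1 : ℝ) / 2) * n ^ ((1 : ℝ) / 2) := by
          rw [← Real.rpow_add hnpos]; norm_num
      _ ≤ n ^ (-(1 : ℝ) / 2) * H := by
          apply mul_le_mul_of_nonneg_left hHge (le_of_lt (by positivity))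
  -- log bounds
  have hlog1 : (1 : ℝ) ≤ Real.log n := by
    rw [Real.le_log_iff_exp_le hnpos]
    calc Real.exp 1 ≤ 2.7182818286 := le_of_lt Real.exp_one_lt_d9
      _ ≤ n := by linarith
  have hG2 : G ≤ 2 * Real.log n := by
    have h1 : G = (harmonic (T + 1) : ℝ) := harmonic_real (T + 1)
    have h2 : (harmonic (T + 1) : ℝ) ≤ 1 + Real.log n := by
      have h3 := harmonic_le_one_add_log (T + 1)
      push_cast at h3
      rw [hn_def]
      exact h3
    rw [h1]
    linarith
  have hGpos : 0 ≤ G := by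
    rw [hG_def]
    apply Finset.sum_nonneg
    intro t _
    positivity
  -- constants
  set c1 : ℝ := 4 * ρ0 * L ^ 2 / (msz * α0 ^ 2) with hc1_def
  set c2 : ℝ := 4 * ρ0 * Ctil / (nsz ^ (r / 2) * α0) with hc2_def
  have hc1pos : 0 < c1 := by positivity
  have hc2pos : 0 < c2 := by positivity
  -- summed descent inequality
  have hkey : ∑ t ∈ Finset.range (T + 1), P t * A t ≤ 2 * Δ0 + c1 * G + c2 * H := by
    have hstep : ∀ t ∈ Finset.range (T + 1),
        P t * A t ≤ (2 * M t - 2 * M (t + 1)) + c1 * ((t : ℝ) + 1)⁻¹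
          + c2 * ((t : ℝ) + 1) ^ (-(1 : ℝ) / 2) := by
      intro t ht
      have hle := hdes t (Nat.lt_succ_iff.mp (Finset.mem_range.mp ht))
      have e1 : 4 * ρ0 * L ^ 2 / (msz * α t ^ 2) = c1 * ((t : ℝ) + 1)⁻¹ := by
        rw [hαdef t, mul_pow, hsq t, hc1_def]
        have h1 := hbase_pos t
        field_simp
      have e2 : 4 * ρ0 * Ctil / (nsz ^ (r / 2) * α t) = c2 * ((t : ℝ) + 1) ^ (-(1 : ℝ) / 2) := by
        rw [hαdef t, hinv t, hc2_def]
        have h1 := hhalf_pos t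
        field_simp
      rw [e1, e2] at hle
      linarith
    calc ∑ t ∈ Finset.range (T + 1), P t * A t
        ≤ ∑ t ∈ Finset.range (T + 1), ((2 * M t - 2 * M (t + 1)) + c1 * ((t : ℝ) + 1)⁻¹
            + c2 * ((t : ℝ) + 1) ^ (-(1 : ℝ) / 2)) := Finset.sum_le_sum hstep
      _ = (2 * M 0 - 2 * M (T + 1)) + c1 * G + c2 * H := by
          rw [Finset.sum_add_distrib, Finset.sum_add_distrib, hG_def, hH_def,
            ← Finset.mul_sum, ← Finset.mul_sum]
          congr 1
          congr 1
          exact Finset.sum_range_sub' (fun i => 2 * M i) (T + 1)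
      _ ≤ 2 * Δ0 + c1 * G + c2 * H := by linarith
  -- rewrite the probability-weighted sum
  have hsum_eq : ∑ t ∈ Finset.range (T + 1), p t * A t
      = (∑ t ∈ Finset.range (T + 1), P t * A t) / S := by
    rw [Finset.sum_div]
    refine Finset.sum_congr rfl fun t _ => ?_
    rw [hpdef t, div_mul_eq_mul_div]
  rw [hsum_eq]
  set B1 : ℝ := 4 * Δ0 * α0 / (ρ0 * (ρ0 - τ)) * n ^ (-(1 : ℝ) / 2) with hB1_def
  set B2 : ℝ := 16 * L ^ 2 / (msz * α0 * (ρ0 - τ)) * Real.log n * n ^ (-(1 : ℝ) / 2) with hB2_def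
  set B3 : ℝ := 4 * Ctil / (nsz ^ (r / 2) * (ρ0 - τ)) with hB3_def
  rw [div_le_iff₀ hSpos]
  have hB1K : B1 * K = 4 * Δ0 * (n ^ (-(1 : ℝ) / 2)) := by
    rw [hB1_def, hK_def]; field_simp
  have hB2K : B2 * K = 16 * L ^ 2 * ρ0 / (msz * α0 ^ 2) * Real.log n * n ^ (-(1 : ℝ) / 2) := by
    rw [hB2_def, hK_def]; field_simp
  have hB3K : B3 * K = c2 := by
    rw [hB3_def, hK_def, hc2_def]; field_simp
  have h1 : 2 * Δ0 ≤ B1 * K * H := by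
    rw [hB1K, mul_assoc]
    have hx := le_mul_of_one_le_right (by linarith : (0:ℝ) ≤ 4 * Δ0) hone
    linarith
  have h2 : c1 * G ≤ B2 * K * H := by
    rw [hB2K]
    have hc : (0 : ℝ) < 4 * L ^ 2 * ρ0 / (msz * α0 ^ 2) := by positivity
    have hGle : G ≤ 2 * Real.log n := hG2
    have key : 4 * G ≤ 16 * Real.log n * (n ^ (-(1 : ℝ) / 2) * H) := by
      have hx := le_mul_of_one_le_right
        (by linarith : (0:ℝ) ≤ 8 * Real.log n) hone
      have hxpos : 0 ≤ Real.log n * (n ^ (-(1 : ℝ) / 2) * H) :=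
        mul_nonneg (by linarith) (by positivity)
      linarith
    calc c1 * G = (ρ0 * L ^ 2 / (msz * α0 ^ 2)) * (4 * G) := by rw [hc1_def]; ring
      _ ≤ (ρ0 * L ^ 2 / (msz * α0 ^ 2)) * (16 * Real.log n * (n ^ (-(1 : ℝ) / 2) * H)) := by
          apply mul_le_mul_of_nonneg_left key (by positivity)
      _ = 16 * L ^ 2 * ρ0 / (msz * α0 ^ 2) * Real.log n * n ^ (-(1 : ℝ) / 2) * H := by ring
  have h3 : c2 * H = B3 * K * H := by rw [hB3K]
  calc ∑ t ∈ Finset.range (T + 1), P t * A t ≤ 2 * Δ0 + c1 * G + c2 * H := hkey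
    _ ≤ B1 * K * H + B2 * K * H + B3 * K * H := by linarith
    _ = (B1 + B2 + B3) * S := by rw [hS]; ring
end

section
/- Let τ > 0, 0 ≤ a ≤ b < 1, ρ_0 > τ, α_0 ≥ ρ_0 + τ, r ∈ (0,1], and set ρ_t = ρ_0(t+1)^a, α_t = α_0(t+1)^b, m_t = ⌈m_0(t+1)^j⌉, n_t = ⌈n_0(t+1)^k⌉ with positive integers m_0, n_0 and real exponents j > 1 + a − 2b and k > 2(1+a−b)/r. Let t̄ ≥ 0 be such that P_t > 0 for all t ≥ t̄ (such t̄ exists). Suppose for every T ≥ t̄ the nonnegative reals {A_t} and reals {M_t} satisfy the per-iteration descent inequality on {t̄,…,T} and M_{t̄} − M_{T+1} ≤ Δ_0, and let p_t = P_t/Σ_{s=t̄}^T P_s for t̄ ≤ t ≤ T (p_t = 0 otherwise). Then: (i) sup_{T≥t̄} Δ(T) < ∞; (ii) Σ_{t} p_t A_t = O((T+1)^{-(1+2a−b)}) as T → ∞; and (iii) (Σ_t p_t ρ_t²)·(Σ_t p_t A_t) = O((T+1)^{-(1−b)}) as T → ∞. (Corollary 2.) -/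
open scoped BigOperators

open Real Filter

private lemma aux_shift_rpow {a : ℝ} (ha : 0 ≤ a) (ha1 : a ≤ 1) (t : ℕ) :
    ((t : ℝ) + 2) ^ a ≤ ((t : ℝ) + 1) ^ a + a * ((t : ℝ) + 1) ^ (a - 1) := by
  have hx : (0:ℝ) < (t : ℝ) + 1 := by positivity
  have key : ((t : ℝ) + 2) = ((t:ℝ)+1) * (1 + 1/((t:ℝ)+1)) := by field_simp; ring
  rw [key, Real.mul_rpow (by positivity) (by positivity)]
  have h0 : (0:ℝ) ≤ 1/((t:ℝ)+1) := by positivity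
  have hs : (-1:ℝ) ≤ 1/((t:ℝ)+1) := by linarith
  have hb : (1 + 1/((t:ℝ)+1)) ^ a ≤ 1 + a * (1/((t:ℝ)+1)) :=
    rpow_one_add_le_one_add_mul_self hs ha ha1
  calc ((t:ℝ)+1)^a * (1 + 1/((t:ℝ)+1))^a
      ≤ ((t:ℝ)+1)^a * (1 + a * (1/((t:ℝ)+1))) :=
        mul_le_mul_of_nonneg_left hb (Real.rpow_nonneg (by positivity) a)
    _ = ((t:ℝ)+1)^a + a * (((t:ℝ)+1)^a / ((t:ℝ)+1)) := by ring
    _ = ((t:ℝ)+1)^a + a * ((t:ℝ)+1)^(a-1) := by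
        rw [Real.rpow_sub_one hx.ne']

private lemma aux_telescope (M : ℕ → ℝ) (tbar : ℕ) :
    ∀ T, tbar ≤ T → ∑ t ∈ Finset.Icc tbar T, (M t - M (t+1)) = M tbar - M (T+1) := by
  intro T hT
  induction T, hT using Nat.le_induction with
  | base => simp
  | succ n hn ih => rw [Finset.sum_Icc_succ_top (by omega), ih]; ring

private lemma aux_summable {s : ℝ} (hs : s < -1) :
    Summable (fun t : ℕ => ((t : ℝ) + 1) ^ s) := by
  have h1 := Real.summable_nat_rpow.mpr hs
  have h2 : Summable (fun n : ℕ => ((n + 1 : ℕ) : ℝ) ^ s) := (summable_nat_add_iff 1).mpr h1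
  exact h2.congr fun n => by push_cast; ring_nf

private lemma aux_frac_bound {x : ℝ} (hx : 0 < x) {c d : ℝ} (hc : 0 ≤ c) (hd : 0 < d)
    {u v : ℝ} {N D : ℝ} (hN : N ≤ c * x ^ u) (hD : d * x ^ v ≤ D) :
    N / D ≤ (c / d) * x ^ (u - v) := by
  have h1 : N / D ≤ (c * x ^ u) / (d * x ^ v) :=
    div_le_div₀ (by positivity) hN (by positivity) hD
  calc N / D ≤ (c * x ^ u) / (d * x ^ v) := h1
    _ = (c / d) * (x ^ u / x ^ v) := mul_div_mul_comm c (x ^ u) d (x ^ v)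
    _ = (c / d) * x ^ (u - v) := by rw [← Real.rpow_sub hx]


set_option maxHeartbeats 1000000 in
/-- **Corollary 2.** With `ρ_t = ρ₀(t+1)^a`, `α_t = α₀(t+1)^b` (`0 ≤ a ≤ b < 1`, `ρ₀ > τ`,
`α₀ ≥ ρ₀ + τ`), sample sizes `m_t = ⌈m₀(t+1)^j⌉`, `n_t = ⌈n₀(t+1)^k⌉` with `j > 1 + a − 2b`
and `k > 2(1+a−b)/r`, and `t̄` with `P_t > 0` for `t ≥ t̄`; if the nonnegative `{A_t}` and
`{M_t}` satisfy the per-iteration descent inequality for all `t ≥ t̄` and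
`M_{t̄} − M_{T+1} ≤ Δ₀` for all `T ≥ t̄`, and `p_T` are the Polyak weights, then:
(i) `sup_{T ≥ t̄} Δ(T) < ∞`;
(ii) `Σ_t p_T(t) A_t = O((T+1)^{-(1+2a−b)})`;
(iii) `(Σ_t p_T(t) ρ_t²)(Σ_t p_T(t) A_t) = O((T+1)^{-(1−b)})`. -/
theorem increasing_sample_size_rates
    (τ ρ0 α0 a b r : ℝ) (hτ : 0 < τ) (hρ0 : τ < ρ0) (hα0 : ρ0 + τ ≤ α0)
    (ha : 0 ≤ a) (hab : a ≤ b) (hb : b < 1) (hr : 0 < r) (hr1 : r ≤ 1)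
    (L Ctil Δ0 : ℝ) (hL : 0 < L) (hCtil : 0 < Ctil) (hΔ0 : 0 ≤ Δ0)
    (m0 n0 : ℕ) (hm0 : 0 < m0) (hn0 : 0 < n0)
    (j k : ℝ) (hj : 1 + a - 2 * b < j) (hk : 2 * (1 + a - b) / r < k)
    (ρ α P : ℕ → ℝ) (msz nsz : ℕ → ℕ)
    (hρdef : ∀ t, ρ t = ρ0 * ((t : ℝ) + 1) ^ a)
    (hαdef : ∀ t, α t = α0 * ((t : ℝ) + 1) ^ b)
    (hmdef : ∀ t, msz t = ⌈(m0 : ℝ) * ((t : ℝ) + 1) ^ j⌉₊)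
    (hndef : ∀ t, nsz t = ⌈(n0 : ℝ) * ((t : ℝ) + 1) ^ k⌉₊)
    (hPdef : ∀ t, P t = ρ (t + 1) * (ρ t - τ) / α t - (ρ (t + 1) - ρ t))
    (tbar : ℕ) (htbar : ∀ t ≥ tbar, 0 < P t)
    (A M : ℕ → ℝ) (hA : ∀ t, 0 ≤ A t)
    (hdes : ∀ t ≥ tbar,
      P t * A t ≤ 2 * M t - 2 * M (t + 1)
        + 4 * ρ (t + 1) * L ^ 2 / ((msz t : ℝ) * α t ^ 2)
        + 4 * ρ (t + 1) * Ctil / ((nsz t : ℝ) ^ (r / 2) * α t))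
    (hM : ∀ T ≥ tbar, M tbar - M (T + 1) ≤ Δ0)
    (p : ℕ → ℕ → ℝ)
    (hpdef : ∀ T t, p T t =
      if tbar ≤ t ∧ t ≤ T then P t / ∑ s ∈ Finset.Icc tbar T, P s else 0) :
    (∃ Bnd : ℝ, ∀ T ≥ tbar,
      2 * Δ0 + ∑ t ∈ Finset.Icc tbar T,
        (4 * ρ (t + 1) * L ^ 2 / ((msz t : ℝ) * α t ^ 2)
          + 4 * ρ (t + 1) * Ctil / ((nsz t : ℝ) ^ (r / 2) * α t)) ≤ Bnd) ∧
    (∃ C0 : ℝ, 0 < C0 ∧ ∃ T0 : ℕ, ∀ T : ℕ, tbar ≤ T → T0 ≤ T →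
      ∑ t ∈ Finset.range (T + 1), p T t * A t ≤ C0 * ((T : ℝ) + 1) ^ (-(1 + 2 * a - b))) ∧
    (∃ C0 : ℝ, 0 < C0 ∧ ∃ T0 : ℕ, ∀ T : ℕ, tbar ≤ T → T0 ≤ T →
      (∑ t ∈ Finset.range (T + 1), p T t * ρ t ^ 2) *
        (∑ t ∈ Finset.range (T + 1), p T t * A t) ≤ C0 * ((T : ℝ) + 1) ^ (-(1 - b))) := by
  have hρ0pos : (0:ℝ) < ρ0 := hτ.trans hρ0
  have hα0pos : (0:ℝ) < α0 := lt_of_lt_of_le (by linarith) hα0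
  have ha1 : a ≤ 1 := hab.trans hb.le
  have hx : ∀ t : ℕ, (0:ℝ) < (t:ℝ) + 1 := fun t => by positivity
  have hx1 : ∀ t : ℕ, (1:ℝ) ≤ (t:ℝ) + 1 := fun t => by
    have : (0:ℝ) ≤ (t:ℝ) := Nat.cast_nonneg t
    linarith
  set s1 : ℝ := j + 2*b - a with hs1def
  set s2 : ℝ := k*(r/2) + b - a with hs2def
  have hs1 : 1 < s1 := by rw [hs1def]; linarith
  have hs2 : 1 < s2 := by
    have hkr : 2*(1+a-b) < k * r := (div_lt_iff₀ hr).mp hk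
    rw [hs2def]; nlinarith
  set C1 : ℝ := 4*ρ0*(2:ℝ)^a*L^2/α0^2 with hC1def
  set C2 : ℝ := 4*ρ0*(2:ℝ)^a*Ctil/α0 with hC2def
  have h2a : (0:ℝ) < (2:ℝ)^a := Real.rpow_pos_of_pos two_pos a
  have hC1 : 0 < C1 := by rw [hC1def]; positivity
  have hC2 : 0 < C2 := by rw [hC2def]; positivity
  -- pointwise bound on the noise term
  have hgle : ∀ t : ℕ,
      4 * ρ (t + 1) * L ^ 2 / ((msz t : ℝ) * α t ^ 2)
        + 4 * ρ (t + 1) * Ctil / ((nsz t : ℝ) ^ (r / 2) * α t)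
      ≤ C1 * ((t:ℝ)+1) ^ (-s1) + C2 * ((t:ℝ)+1) ^ (-s2) := by
    intro t
    have hxp := hx t
    have hρt1 : ρ (t+1) = ρ0 * ((t:ℝ)+2)^a := by rw [hρdef]; push_cast; ring_nf
    have hshift : ((t:ℝ)+2)^a ≤ (2:ℝ)^a * ((t:ℝ)+1)^a := by
      rw [← Real.mul_rpow (by norm_num) (by positivity)]
      exact Real.rpow_le_rpow (by positivity) (by linarith) ha
    have hnum1 : 4 * ρ (t+1) * L^2 ≤ (4*ρ0*(2:ℝ)^a*L^2) * ((t:ℝ)+1)^a := by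
      rw [hρt1]
      nlinarith [mul_le_mul_of_nonneg_left hshift (show (0:ℝ) ≤ 4*ρ0*L^2 by positivity)]
    have hnum2 : 4 * ρ (t+1) * Ctil ≤ (4*ρ0*(2:ℝ)^a*Ctil) * ((t:ℝ)+1)^a := by
      rw [hρt1]
      nlinarith [mul_le_mul_of_nonneg_left hshift (show (0:ℝ) ≤ 4*ρ0*Ctil by positivity)]
    have hmsz : ((t:ℝ)+1)^j ≤ (msz t : ℝ) := by
      rw [hmdef]
      calc ((t:ℝ)+1)^j = 1 * ((t:ℝ)+1)^j := (one_mul _).symm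
        _ ≤ (m0:ℝ) * ((t:ℝ)+1)^j := by
            apply mul_le_mul_of_nonneg_right _ (Real.rpow_nonneg hxp.le j)
            exact_mod_cast hm0
        _ ≤ _ := Nat.le_ceil _
    have hden1 : α0^2 * ((t:ℝ)+1)^(j + 2*b) ≤ (msz t : ℝ) * α t ^ 2 := by
      have hα2 : α t ^ 2 = α0^2 * ((t:ℝ)+1)^(2*b) := by
        rw [hαdef, mul_pow, ← Real.rpow_natCast (((t:ℝ)+1)^b) 2, ← Real.rpow_mul hxp.le]
        congr 1
        push_cast
        ring
      rw [hα2, Real.rpow_add hxp]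
      calc α0^2 * (((t:ℝ)+1)^j * ((t:ℝ)+1)^(2*b))
          = ((t:ℝ)+1)^j * (α0^2 * ((t:ℝ)+1)^(2*b)) := by ring
        _ ≤ (msz t : ℝ) * (α0^2 * ((t:ℝ)+1)^(2*b)) := by
            apply mul_le_mul_of_nonneg_right hmsz
            positivity
    have hnsz : ((t:ℝ)+1)^(k*(r/2)) ≤ (nsz t : ℝ) ^ (r/2) := by
      rw [hndef, Real.rpow_mul hxp.le]
      apply Real.rpow_le_rpow (Real.rpow_nonneg hxp.le k) _ (by positivity)
      calc ((t:ℝ)+1)^k = 1 * ((t:ℝ)+1)^k := (one_mul _).symm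
        _ ≤ (n0:ℝ) * ((t:ℝ)+1)^k := by
            apply mul_le_mul_of_nonneg_right _ (Real.rpow_nonneg hxp.le k)
            exact_mod_cast hn0
        _ ≤ _ := Nat.le_ceil _
    have hden2 : α0 * ((t:ℝ)+1)^(k*(r/2) + b) ≤ (nsz t : ℝ) ^ (r/2) * α t := by
      rw [hαdef, Real.rpow_add hxp]
      calc α0 * (((t:ℝ)+1)^(k*(r/2)) * ((t:ℝ)+1)^b)
          = ((t:ℝ)+1)^(k*(r/2)) * (α0 * ((t:ℝ)+1)^b) := by ring
        _ ≤ (nsz t : ℝ) ^ (r/2) * (α0 * ((t:ℝ)+1)^b) := by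
            apply mul_le_mul_of_nonneg_right hnsz
            positivity
    have hb1 := aux_frac_bound hxp (by positivity : (0:ℝ) ≤ 4*ρ0*(2:ℝ)^a*L^2)
      (by positivity : (0:ℝ) < α0^2) hnum1 hden1
    have hb2 := aux_frac_bound hxp (by positivity : (0:ℝ) ≤ 4*ρ0*(2:ℝ)^a*Ctil)
      hα0pos hnum2 hden2
    have e1 : a - (j + 2*b) = -s1 := by rw [hs1def]; ring
    have e2 : a - (k*(r/2) + b) = -s2 := by rw [hs2def]; ring
    rw [e1] at hb1
    rw [e2] at hb2
    exact add_le_add hb1 hb2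
  have hsummh : Summable (fun t : ℕ => C1 * ((t:ℝ)+1)^(-s1) + C2 * ((t:ℝ)+1)^(-s2)) :=
    ((aux_summable (by linarith)).mul_left C1).add ((aux_summable (by linarith)).mul_left C2)
  set Z : ℝ := ∑' t : ℕ, (C1 * ((t:ℝ)+1)^(-s1) + C2 * ((t:ℝ)+1)^(-s2)) with hZdef
  have hZ : ∀ T : ℕ, ∑ t ∈ Finset.Icc tbar T,
      (C1 * ((t:ℝ)+1)^(-s1) + C2 * ((t:ℝ)+1)^(-s2)) ≤ Z :=
    fun T => Summable.sum_le_tsum _ (fun i _ => by positivity) hsummh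
  have hZ0 : 0 ≤ Z := tsum_nonneg (fun i => by positivity)
  set Bnd : ℝ := 2*Δ0 + Z with hBnddef
  have hBnd0 : 0 ≤ Bnd := by rw [hBnddef]; linarith
  have hgsum : ∀ T : ℕ, ∑ t ∈ Finset.Icc tbar T,
      (4 * ρ (t + 1) * L ^ 2 / ((msz t : ℝ) * α t ^ 2)
        + 4 * ρ (t + 1) * Ctil / ((nsz t : ℝ) ^ (r / 2) * α t)) ≤ Z :=
    fun T => le_trans (Finset.sum_le_sum (fun i _ => hgle i)) (hZ T)
  have part1 : ∀ T ≥ tbar,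
      2 * Δ0 + ∑ t ∈ Finset.Icc tbar T,
        (4 * ρ (t + 1) * L ^ 2 / ((msz t : ℝ) * α t ^ 2)
          + 4 * ρ (t + 1) * Ctil / ((nsz t : ℝ) ^ (r / 2) * α t)) ≤ Bnd := by
    intro T _
    rw [hBnddef]
    linarith [hgsum T]
  -- Σ P_t A_t ≤ Bnd
  have hPA : ∀ T, tbar ≤ T → ∑ t ∈ Finset.Icc tbar T, P t * A t ≤ Bnd := by
    intro T hT
    have step : ∑ t ∈ Finset.Icc tbar T, P t * A t
        ≤ ∑ t ∈ Finset.Icc tbar T, (2*(M t - M (t+1))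
          + (4 * ρ (t + 1) * L ^ 2 / ((msz t : ℝ) * α t ^ 2)
            + 4 * ρ (t + 1) * Ctil / ((nsz t : ℝ) ^ (r / 2) * α t))) := by
      apply Finset.sum_le_sum
      intro i hi
      have hi' : tbar ≤ i := (Finset.mem_Icc.mp hi).1
      have := hdes i hi'
      linarith
    rw [Finset.sum_add_distrib, ← Finset.mul_sum, aux_telescope M tbar T hT] at step
    have h1 := hM T hT
    have h2 := hgsum T
    rw [hBnddef]
    linarith
  -- lower bound on P
  set e : ℝ := 2*a - b with hedef
  set c1 : ℝ := ρ0*(ρ0-τ)/α0 with hc1def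
  have hc1 : 0 < c1 := by
    rw [hc1def]
    apply div_pos _ hα0pos
    nlinarith
  have hPlow : ∀ t : ℕ, c1 * ((t:ℝ)+1)^e - ρ0*a*((t:ℝ)+1)^(a-1) ≤ P t := by
    intro t
    have hxp := hx t
    have hρt1 : ρ (t+1) = ρ0 * ((t:ℝ)+2)^a := by rw [hρdef]; push_cast; ring_nf
    rw [hPdef, hρt1, hρdef, hαdef]
    have hxa1 : (1:ℝ) ≤ ((t:ℝ)+1)^a := by
      calc (1:ℝ) = ((t:ℝ)+1)^(0:ℝ) := (Real.rpow_zero _).symm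
        _ ≤ _ := Real.rpow_le_rpow_of_exponent_le (hx1 t) ha
    have hmono : ((t:ℝ)+1)^a ≤ ((t:ℝ)+2)^a := Real.rpow_le_rpow hxp.le (by linarith) ha
    have hτ2 : (ρ0-τ) * ((t:ℝ)+1)^a ≤ ρ0 * ((t:ℝ)+1)^a - τ := by
      nlinarith [mul_nonneg hτ.le (sub_nonneg.mpr hxa1)]
    have hpos1 : (0:ℝ) ≤ (ρ0-τ) * ((t:ℝ)+1)^a :=
      mul_nonneg (by linarith) (by positivity)
    have hnum : (ρ0*(ρ0-τ)) * (((t:ℝ)+1)^a * ((t:ℝ)+1)^a)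
        ≤ ρ0 * ((t:ℝ)+2)^a * (ρ0 * ((t:ℝ)+1)^a - τ) := by
      calc (ρ0*(ρ0-τ)) * (((t:ℝ)+1)^a * ((t:ℝ)+1)^a)
          = (ρ0*((t:ℝ)+1)^a) * ((ρ0-τ) * ((t:ℝ)+1)^a) := by ring
        _ ≤ (ρ0*((t:ℝ)+1)^a) * (ρ0 * ((t:ℝ)+1)^a - τ) :=
            mul_le_mul_of_nonneg_left hτ2 (by positivity)
        _ ≤ (ρ0*((t:ℝ)+2)^a) * (ρ0 * ((t:ℝ)+1)^a - τ) :=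
            mul_le_mul_of_nonneg_right (mul_le_mul_of_nonneg_left hmono hρ0pos.le)
              (le_trans hpos1 hτ2)
        _ = ρ0 * ((t:ℝ)+2)^a * (ρ0 * ((t:ℝ)+1)^a - τ) := by ring
    have partA : c1 * ((t:ℝ)+1)^e ≤ ρ0 * ((t:ℝ)+2)^a * (ρ0 * ((t:ℝ)+1)^a - τ)
        / (α0 * ((t:ℝ)+1)^b) := by
      have key : c1 * ((t:ℝ)+1)^e
          = (ρ0*(ρ0-τ)) * (((t:ℝ)+1)^a * ((t:ℝ)+1)^a) / (α0 * ((t:ℝ)+1)^b) := by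
        have hxx : ((t:ℝ)+1)^a * ((t:ℝ)+1)^a = ((t:ℝ)+1)^(a+a) :=
          (Real.rpow_add hxp a a).symm
        rw [hc1def, hedef, hxx, show 2*a-b = (a+a)-b from by ring, Real.rpow_sub hxp]
        exact div_mul_div_comm _ _ _ _
      rw [key]
      have hnn : (0:ℝ) ≤ (ρ0*(ρ0-τ)) * (((t:ℝ)+1)^a * ((t:ℝ)+1)^a) :=
        mul_nonneg (mul_nonneg hρ0pos.le (by linarith)) (by positivity)
      exact div_le_div₀ (hnn.trans hnum) hnum (by positivity) le_rfl
    have hB := aux_shift_rpow ha ha1 t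
    have partB : ρ0*((t:ℝ)+2)^a - ρ0*((t:ℝ)+1)^a ≤ ρ0*a*((t:ℝ)+1)^(a-1) := by
      nlinarith [mul_le_mul_of_nonneg_left hB hρ0pos.le]
    linarith
  -- eventual domination
  have hγ : (0:ℝ) < 1 + a - b := by linarith
  have htend : Filter.Tendsto (fun t : ℕ => ρ0*a*((t:ℝ)+1)^(-(1+a-b)))
      Filter.atTop (nhds 0) := by
    have h1 : Filter.Tendsto (fun t : ℕ => (t:ℝ)+1) Filter.atTop Filter.atTop :=
      Filter.tendsto_atTop_add_const_right _ 1 tendsto_natCast_atTop_atTop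
    have h2 := (tendsto_rpow_neg_atTop hγ).comp h1
    have h3 := h2.const_mul (ρ0*a)
    simpa using h3
  have hev : ∀ᶠ t : ℕ in Filter.atTop, ρ0*a*((t:ℝ)+1)^(-(1+a-b)) < c1/2 :=
    htend.eventually_lt_const (by positivity)
  obtain ⟨N, hN⟩ := Filter.eventually_atTop.mp hev
  set T1 := max N tbar with hT1def
  have hT1 : ∀ t, T1 ≤ t → (c1/2) * ((t:ℝ)+1)^e ≤ P t := by
    intro t ht
    have h1 := hPlow t
    have h2 := hN t (le_trans (le_max_left _ _) ht)
    have h3 : ((t:ℝ)+1)^(a-1) = ((t:ℝ)+1)^(-(1+a-b)) * ((t:ℝ)+1)^e := by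
      rw [← Real.rpow_add (hx t)]
      congr 1
      rw [hedef]; ring
    have hxe : (0:ℝ) ≤ ((t:ℝ)+1)^e := Real.rpow_nonneg (hx t).le e
    have h4 : ρ0*a*((t:ℝ)+1)^(a-1) ≤ (c1/2) * ((t:ℝ)+1)^e := by
      rw [h3, ← mul_assoc]
      exact mul_le_mul_of_nonneg_right h2.le hxe
    linarith
  -- summed lower bound
  set κ : ℝ := min ((2:ℝ)^(-e)) 1 with hκdef
  have hκ : 0 < κ := lt_min (Real.rpow_pos_of_pos two_pos _) one_pos
  set c2 : ℝ := (c1/2)*κ/2 with hc2def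
  have hc2 : 0 < c2 := by rw [hc2def]; positivity
  have hS : ∀ T : ℕ, 2*T1+2 ≤ T →
      c2*((T:ℝ)+1)^(1+e) ≤ ∑ t ∈ Finset.Icc tbar T, P t := by
    intro T hT
    set t0 := (T+1)/2 with ht0def
    have ht0a : T1 ≤ t0 := by omega
    have ht0b : t0 ≤ T := by omega
    have htbarT1 : tbar ≤ T1 := le_max_right _ _
    have hsub : Finset.Icc t0 T ⊆ Finset.Icc tbar T :=
      Finset.Icc_subset_Icc (le_trans htbarT1 ht0a) le_rfl
    have hstep1 : ∑ t ∈ Finset.Icc t0 T, P t ≤ ∑ t ∈ Finset.Icc tbar T, P t := by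
      apply Finset.sum_le_sum_of_subset_of_nonneg hsub
      intro i hi _
      exact (htbar i (Finset.mem_Icc.mp hi).1).le
    have hstep2 : ∀ t ∈ Finset.Icc t0 T, (c1/2)*κ*((T:ℝ)+1)^e ≤ P t := by
      intro t ht
      obtain ⟨ht1, ht2⟩ := Finset.mem_Icc.mp ht
      have hlow : ((T:ℝ)+1)/2 ≤ (t:ℝ)+1 := by
        have hn : T + 1 ≤ 2*t + 2 := by omega
        have : ((T:ℝ))+1 ≤ 2*(t:ℝ)+2 := by exact_mod_cast hn
        linarith
      have hhigh : (t:ℝ)+1 ≤ (T:ℝ)+1 := by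
        have : (t:ℝ) ≤ (T:ℝ) := by exact_mod_cast ht2
        linarith
      have hbase : κ*((T:ℝ)+1)^e ≤ ((t:ℝ)+1)^e := by
        rcases le_or_gt 0 e with hepos | heneg
        · have h1 : (((T:ℝ)+1)/2)^e ≤ ((t:ℝ)+1)^e :=
            Real.rpow_le_rpow (by positivity) hlow hepos
          have h2 : (((T:ℝ)+1)/2)^e = ((T:ℝ)+1)^e * ((2:ℝ)^e)⁻¹ := by
            rw [Real.div_rpow (hx T).le (by norm_num), div_eq_mul_inv]
          have h4 : (2:ℝ)^(-e) = ((2:ℝ)^e)⁻¹ := Real.rpow_neg (by norm_num) e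
          calc κ*((T:ℝ)+1)^e ≤ ((2:ℝ)^e)⁻¹ * ((T:ℝ)+1)^e := by
                apply mul_le_mul_of_nonneg_right _ (Real.rpow_nonneg (hx T).le e)
                rw [← h4]
                exact min_le_left _ _
            _ = (((T:ℝ)+1)/2)^e := by rw [h2]; ring
            _ ≤ _ := h1
        · have h1 : ((T:ℝ)+1)^e ≤ ((t:ℝ)+1)^e :=
            Real.rpow_le_rpow_of_nonpos (hx t) hhigh heneg.le
          calc κ*((T:ℝ)+1)^e ≤ 1*((T:ℝ)+1)^e :=
                mul_le_mul_of_nonneg_right (min_le_right _ _) (Real.rpow_nonneg (hx T).le e)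
            _ ≤ _ := by rw [one_mul]; exact h1
      have hPt := hT1 t (le_trans ht0a ht1)
      calc (c1/2)*κ*((T:ℝ)+1)^e = (c1/2)*(κ*((T:ℝ)+1)^e) := by ring
        _ ≤ (c1/2)*((t:ℝ)+1)^e := mul_le_mul_of_nonneg_left hbase (by positivity)
        _ ≤ P t := hPt
    have hcard := Finset.card_nsmul_le_sum (Finset.Icc t0 T) P ((c1/2)*κ*((T:ℝ)+1)^e) hstep2
    rw [Nat.card_Icc, nsmul_eq_mul] at hcard
    have hcast : ((T:ℝ)+1)/2 ≤ ((T + 1 - t0 : ℕ) : ℝ) := by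
      have h2t0 : 2*t0 ≤ T+1 := by omega
      have ht0le : t0 ≤ T+1 := by omega
      rw [Nat.cast_sub ht0le]
      push_cast
      have : 2*(t0:ℝ) ≤ (T:ℝ)+1 := by exact_mod_cast h2t0
      linarith
    have hfac : (0:ℝ) ≤ (c1/2)*κ*((T:ℝ)+1)^e := by positivity
    calc c2*((T:ℝ)+1)^(1+e) = (((T:ℝ)+1)/2) * ((c1/2)*κ*((T:ℝ)+1)^e) := by
          rw [hc2def, Real.rpow_add (hx T), Real.rpow_one]
          ring
      _ ≤ ((T + 1 - t0 : ℕ) : ℝ) * ((c1/2)*κ*((T:ℝ)+1)^e) :=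
          mul_le_mul_of_nonneg_right hcast hfac
      _ ≤ ∑ t ∈ Finset.Icc t0 T, P t := hcard
      _ ≤ _ := hstep1
  -- positivity of S and p
  have hSpos : ∀ T, tbar ≤ T → 0 < ∑ s ∈ Finset.Icc tbar T, P s := by
    intro T hT
    apply Finset.sum_pos
    · intro i hi
      exact htbar i (Finset.mem_Icc.mp hi).1
    · exact ⟨tbar, Finset.mem_Icc.mpr ⟨le_rfl, hT⟩⟩
  have hp0 : ∀ T t, 0 ≤ p T t := by
    intro T t
    rw [hpdef]
    split_ifs with h
    · exact div_nonneg (htbar t h.1).le (hSpos T (le_trans h.1 h.2)).le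
    · exact le_rfl
  -- rewrite the weighted sums
  have hsum_eq : ∀ T, tbar ≤ T → ∀ f : ℕ → ℝ,
      ∑ t ∈ Finset.range (T+1), p T t * f t
        = ∑ t ∈ Finset.Icc tbar T, (P t * f t) / (∑ s ∈ Finset.Icc tbar T, P s) := by
    intro T hT f
    have hsub : Finset.Icc tbar T ⊆ Finset.range (T+1) := by
      intro x hxm
      rw [Finset.mem_range]
      have := (Finset.mem_Icc.mp hxm).2
      omega
    have h0 : ∀ x ∈ Finset.range (T+1), x ∉ Finset.Icc tbar T → p T x * f x = 0 := by
      intro x _ hxn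
      rw [Finset.mem_Icc] at hxn
      rw [hpdef, if_neg hxn, zero_mul]
    rw [← Finset.sum_subset hsub h0]
    apply Finset.sum_congr rfl
    intro x hxm
    rw [hpdef, if_pos (Finset.mem_Icc.mp hxm), div_mul_eq_mul_div]
  -- part (ii)
  set C0ii : ℝ := (Bnd+1)/c2 with hC0iidef
  have hC0ii : 0 < C0ii := div_pos (by linarith) hc2
  have part2 : ∀ T : ℕ, tbar ≤ T → 2*T1+2 ≤ T →
      ∑ t ∈ Finset.range (T + 1), p T t * A t
        ≤ C0ii * ((T : ℝ) + 1) ^ (-(1 + 2 * a - b)) := by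
    intro T hT hT0
    have hSp := hSpos T hT
    have hSl := hS T hT0
    rw [hsum_eq T hT A, ← Finset.sum_div]
    have key : C0ii * ((T:ℝ)+1)^(-(1+2*a-b)) = (Bnd+1)/(c2*((T:ℝ)+1)^(1+e)) := by
      have hne : ((T:ℝ)+1)^(1+e) ≠ 0 := (Real.rpow_pos_of_pos (hx T) _).ne'
      rw [show -(1+2*a-b) = -(1+e) by rw [hedef]; ring, Real.rpow_neg (hx T).le,
        hC0iidef]
      field_simp
    rw [key]
    apply div_le_div₀ (by linarith) (by linarith [hPA T hT]) (by positivity) hSl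
  -- part (iii)
  have part3 : ∀ T : ℕ, tbar ≤ T → 2*T1+2 ≤ T →
      (∑ t ∈ Finset.range (T + 1), p T t * ρ t ^ 2) *
        (∑ t ∈ Finset.range (T + 1), p T t * A t)
        ≤ (ρ0^2 * C0ii) * ((T : ℝ) + 1) ^ (-(1 - b)) := by
    intro T hT hT0
    have hSp := hSpos T hT
    have h2 := part2 T hT hT0
    have hApos : 0 ≤ ∑ t ∈ Finset.range (T+1), p T t * A t :=
      Finset.sum_nonneg (fun i _ => mul_nonneg (hp0 T i) (hA i))
    have hρbound : ∑ t ∈ Finset.range (T+1), p T t * ρ t ^ 2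
        ≤ ρ0^2 * (((T:ℝ)+1)^a)^2 := by
      rw [hsum_eq T hT (fun t => ρ t ^ 2)]
      have hcalc : ∑ t ∈ Finset.Icc tbar T, (P t * ρ t ^ 2) / (∑ s ∈ Finset.Icc tbar T, P s)
          ≤ ∑ t ∈ Finset.Icc tbar T,
            (P t * (ρ0^2 * (((T:ℝ)+1)^a)^2)) / (∑ s ∈ Finset.Icc tbar T, P s) := by
        apply Finset.sum_le_sum
        intro i hi
        obtain ⟨hi1, hi2⟩ := Finset.mem_Icc.mp hi
        have hρi : ρ i ^ 2 ≤ ρ0^2 * (((T:ℝ)+1)^a)^2 := by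
          rw [hρdef, mul_pow]
          have hmon : ((i:ℝ)+1)^a ≤ ((T:ℝ)+1)^a := by
            apply Real.rpow_le_rpow (hx i).le _ ha
            have : (i:ℝ) ≤ (T:ℝ) := by exact_mod_cast hi2
            linarith
          have h0 : (0:ℝ) ≤ ((i:ℝ)+1)^a := Real.rpow_nonneg (hx i).le a
          exact mul_le_mul_of_nonneg_left (pow_le_pow_left₀ h0 hmon 2) (sq_nonneg ρ0)
        exact div_le_div₀
          (mul_nonneg (htbar i hi1).le (by positivity))
          (mul_le_mul_of_nonneg_left hρi (htbar i hi1).le) hSp le_rfl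
      calc ∑ t ∈ Finset.Icc tbar T, (P t * ρ t ^ 2) / (∑ s ∈ Finset.Icc tbar T, P s)
          ≤ ∑ t ∈ Finset.Icc tbar T,
            (P t * (ρ0^2 * (((T:ℝ)+1)^a)^2)) / (∑ s ∈ Finset.Icc tbar T, P s) := hcalc
        _ = (∑ t ∈ Finset.Icc tbar T, P t) * (ρ0^2 * (((T:ℝ)+1)^a)^2)
              / (∑ s ∈ Finset.Icc tbar T, P s) := by
            rw [← Finset.sum_div, ← Finset.sum_mul]
        _ = ρ0^2 * (((T:ℝ)+1)^a)^2 := by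
            rw [mul_comm, mul_div_assoc, div_self hSp.ne', mul_one]
    have hrw : (((T:ℝ)+1)^a)^2 * ((T:ℝ)+1)^(-(1+2*a-b)) = ((T:ℝ)+1)^(-(1-b)) := by
      rw [sq, ← Real.rpow_add (hx T), ← Real.rpow_add (hx T)]
      congr 1
      ring
    calc (∑ t ∈ Finset.range (T + 1), p T t * ρ t ^ 2) *
          (∑ t ∈ Finset.range (T + 1), p T t * A t)
        ≤ (ρ0^2 * (((T:ℝ)+1)^a)^2) * (C0ii * ((T:ℝ)+1)^(-(1+2*a-b))) :=
          mul_le_mul hρbound h2 hApos (by positivity)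
      _ = (ρ0^2 * C0ii) * ((((T:ℝ)+1)^a)^2 * ((T:ℝ)+1)^(-(1+2*a-b))) := by ring
      _ = (ρ0^2 * C0ii) * ((T:ℝ)+1)^(-(1-b)) := by rw [hrw]
  exact ⟨⟨Bnd, part1⟩, ⟨C0ii, hC0ii, 2*T1+2, part2⟩,
    ⟨ρ0^2 * C0ii, by positivity, 2*T1+2, part3⟩⟩
end
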